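/- arXiv:2208.04276 — 6 statements merged into one kernel-verified Lean document; each statement's English description precedes it below -/
import Mathlib

section
/- Let m ≥ 1 and fix interval bounds with boundary matrix B. Then the following are equivalent: (i) the boundary matrix B is an M-matrix; (ii) every matrix Υ satisfying the interval bounds has positive diagonal entries and there exists a positive diagonal matrix D_Υ such that Υ·D_Υ is strictly row diagonally dominant. Moreover, when B is an M-matrix, a single positive diagonal matrix D can be chosen that works simultaneously for all Υ satisfying the interval bounds. -/
open Matrix BigOperators Finset

/-- A real square matrix is an M-matrix if all off-diagonal entries are nonpositive and
every eigenvalue (complex root of the characteristic polynomial) has positive real part. -/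
def IsMMatrix {m : ℕ} (A : Matrix (Fin m) (Fin m) ℝ) : Prop :=
  (∀ i j, i ≠ j → A i j ≤ 0) ∧
  ∀ z : ℂ, (A.map Complex.ofReal).charpoly.IsRoot z → 0 < z.re

/-- Strict row diagonal dominance. -/
def StrictRowDiagDom {m : ℕ} (A : Matrix (Fin m) (Fin m) ℝ) : Prop :=
  ∀ i, ∑ j ∈ Finset.univ.erase i, |A i j| < |A i i|

/-- Υ satisfies the interval bounds given by `lo` (lower bounds for diagonal) and
`hi` (bounds for absolute values of all entries). -/
def SatisfiesBounds {m : ℕ} (lo : Fin m → ℝ) (hi : Fin m → Fin m → ℝ)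
    (Υ : Matrix (Fin m) (Fin m) ℝ) : Prop :=
  (∀ i, lo i ≤ Υ i i) ∧ ∀ i j, |Υ i j| ≤ hi i j

/-- The boundary matrix of the interval bounds. -/
def boundaryMatrix {m : ℕ} (lo : Fin m → ℝ) (hi : Fin m → Fin m → ℝ) :
    Matrix (Fin m) (Fin m) ℝ :=
  Matrix.of fun i j => if i = j then lo i else -hi i j

section Aux
open Filter Topology Polynomial

set_option linter.unnecessarySeqFocus false

lemma my_charpoly_eval {n R : Type*} [Fintype n] [DecidableEq n] [CommRing R]
    (M : Matrix n n R) (x : R) :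
    M.charpoly.eval x = (Matrix.diagonal (fun _ => x) - M).det := by
  rw [Matrix.charpoly, ← Polynomial.coe_evalRingHom, RingHom.map_det]
  congr 1; ext i j; by_cases h : i = j <;> simp [h, Matrix.charmatrix_apply]

lemma my_reLt {z : ℂ} {c : ℝ} (h : ‖z - c‖ < c) : 0 < z.re := by
  have h1 : |(z - (c:ℂ)).re| ≤ ‖z - c‖ := Complex.abs_re_le_norm _
  have h2 : (z - (c:ℂ)).re = z.re - c := by simp
  rw [h2] at h1
  have := abs_lt.mp (lt_of_le_of_lt h1 h)
  linarith [this.1]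

lemma my_det_block {ι : Type*} [Fintype ι] [DecidableEq ι] (M : Matrix ι ι ℝ)
    (p : ι → Prop) [DecidablePred p]
    (h : ∀ i j, ¬ p i → p j → M i j = 0) :
    M.det = (M.submatrix (fun i : {x // p x} => (i : ι)) (fun j : {x // p x} => (j : ι))).det *
      (M.submatrix (fun i : {x // ¬ p x} => (i : ι)) (fun j : {x // ¬ p x} => (j : ι))).det := by
  classical
  let e := Equiv.sumCompl p
  have key : M.submatrix e e = Matrix.fromBlocks
      (M.submatrix (fun i : {x // p x} => (i : ι)) (fun j : {x // p x} => (j : ι)))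
      (M.submatrix (fun i : {x // p x} => (i : ι)) (fun j : {x // ¬ p x} => (j : ι)))
      0
      (M.submatrix (fun i : {x // ¬ p x} => (i : ι)) (fun j : {x // ¬ p x} => (j : ι))) := by
    ext i j
    cases i <;> cases j <;>
      simp [e, Matrix.fromBlocks, Equiv.sumCompl, Matrix.submatrix] <;>
      first
        | rfl
        | (rename_i a b; exact h a b a.2 b.2)
  rw [← Matrix.det_submatrix_equiv_self e M, key, Matrix.det_fromBlocks_zero₂₁]


lemma my_lemD_aux {ι : Type*} [Fintype ι] [DecidableEq ι] :
    ∀ (k : ℕ) (M : Matrix ι ι ℝ), (∀ i j, i ≠ j → M i j ≤ 0) → M.det ≠ 0 →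
    ∀ d : ι → ℝ, (∀ i, 0 < d i) → (∀ i, 0 ≤ M.mulVec d i) →
    (Finset.univ.filter fun i => M.mulVec d i = 0).card ≤ k →
    ∃ d' : ι → ℝ, (∀ i, 0 < d' i) ∧ ∀ i, 0 < M.mulVec d' i := by
  intro k
  induction k with
  | zero =>
    intro M hZ hdet d hd hMd hcard
    refine ⟨d, hd, fun i => ?_⟩
    rcases (hMd i).lt_or_eq with h | h
    · exact h
    · exfalso
      have : i ∈ Finset.univ.filter fun i => M.mulVec d i = 0 := by
        simp [← h]
      have := Finset.card_pos.mpr ⟨i, this⟩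
      omega
  | succ k ih =>
    intro M hZ hdet d hd hMd hcard
    set Z := Finset.univ.filter fun i => M.mulVec d i = 0 with hZdef
    by_cases hZe : Z = ∅
    · refine ⟨d, hd, fun i => ?_⟩
      rcases (hMd i).lt_or_eq with h | h
      · exact h
      · exact absurd (hZdef ▸ Finset.mem_filter.mpr ⟨Finset.mem_univ i, h.symm⟩)
          (by simp [hZe])
    · classical
      set N := Z.filter (fun i => ∃ j, j ∉ Z ∧ M i j ≠ 0) with hNdef
      by_cases hNe : N = ∅
      · -- block structure, det M = 0, contradiction
        exfalso
        have hblock : ∀ i j, i ∈ Z → j ∉ Z → M i j = 0 := by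
          intro i j hi hj
          by_contra hne
          have : i ∈ N := Finset.mem_filter.mpr ⟨hi, j, hj, hne⟩
          simp [hNe] at this
        have hdetZ : (M.submatrix (fun i : {x // ¬ x ∉ Z} => (i : ι))
            (fun j : {x // ¬ x ∉ Z} => (j : ι))).det = 0 := by
          rw [← Matrix.exists_mulVec_eq_zero_iff]
          obtain ⟨i0, hi0⟩ := Finset.nonempty_of_ne_empty hZe
          refine ⟨fun j => d j, ?_, ?_⟩
          · intro h0
            have h1 := congrFun h0 ⟨i0, by simpa using hi0⟩
            simp at h1
            exact absurd h1 (ne_of_gt (hd i0))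
          · funext i
            have hiZ : (i : ι) ∈ Z := not_not.mp i.2
            have : M.mulVec d i = 0 := (Finset.mem_filter.mp hiZ).2
            rw [Matrix.mulVec, Pi.zero_apply]
            calc (fun j : {x // ¬ x ∉ Z} => M i j) ⬝ᵥ (fun j => d j)
                = ∑ j : {x // ¬ x ∉ Z}, M i j * d j := rfl
              _ = ∑ j ∈ Z, M i j * d j := by
                  rw [← Finset.sum_subtype Z (fun j => by simp) (fun j => M i j * d j)]
              _ = ∑ j ∈ Finset.univ, M i j * d j := by
                  refine Finset.sum_subset (Finset.subset_univ Z) ?_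
                  intro j _ hj
                  rw [hblock i j hiZ hj, zero_mul]
              _ = 0 := this
        apply hdet
        rw [my_det_block M (fun x => x ∉ Z) (fun i j hi hj => hblock i j (not_not.mp hi) hj)]
        rw [hdetZ, mul_zero]
      · -- shrink step
        obtain ⟨i1, hi1⟩ := Finset.nonempty_of_ne_empty hNe
        have hZne : Z.Nonempty := ⟨i1, (Finset.mem_filter.mp hi1).1⟩
        -- s = complement of Z, nonempty
        have hsne : (Finset.univ.filter (· ∉ Z)).Nonempty := by
          obtain ⟨j1, hj1, _⟩ := (Finset.mem_filter.mp hi1).2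
          exact ⟨j1, Finset.mem_filter.mpr ⟨Finset.mem_univ _, hj1⟩⟩
        set s := Finset.univ.filter (· ∉ Z) with hsdef
        set A : ℝ := 1 + ∑ i, ∑ j, |M i j| with hAdef
        have hA1 : (1:ℝ) ≤ A := by
          have : (0:ℝ) ≤ ∑ i, ∑ j, |M i j| :=
            Finset.sum_nonneg fun i _ => Finset.sum_nonneg fun j _ => abs_nonneg _
          simp [hAdef]; linarith
        have hApos : 0 < A := lt_of_lt_of_le one_pos hA1
        set ε : ℝ := (s.inf' hsne (fun i => min (d i) (M.mulVec d i / A))) / 2 with hεdef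
        have hεpos : 0 < ε := by
          apply div_pos _ two_pos
          apply Finset.lt_inf'_iff .. |>.mpr
          intro i hi
          have hdi := hd i
          have hmi : 0 < M.mulVec d i := by
            rcases (hMd i).lt_or_eq with h | h
            · exact h
            · exfalso
              have : i ∈ Z := Finset.mem_filter.mpr ⟨Finset.mem_univ _, h.symm⟩
              exact (Finset.mem_filter.mp hi).2 this
          exact lt_min hdi (div_pos hmi hApos)
        have hεlt : ∀ i ∈ s, ε < min (d i) (M.mulVec d i / A) := by
          intro i hi
          have h1 : s.inf' hsne (fun i => min (d i) (M.mulVec d i / A)) ≤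
              min (d i) (M.mulVec d i / A) := Finset.inf'_le _ hi
          have : 0 < s.inf' hsne (fun i => min (d i) (M.mulVec d i / A)) := by
            have := hεpos; rw [hεdef] at this; linarith
          rw [hεdef]; linarith
        -- the vector c
        set c : ι → ℝ := fun j => if j ∈ Z then 0 else 1 with hcdef
        set d' : ι → ℝ := fun j => d j - ε * c j with hd'def
        have hmv : ∀ i, M.mulVec d' i = M.mulVec d i - ε * (∑ j ∈ s, M i j) := by
          intro i
          have : M.mulVec d' = M.mulVec d - ε • M.mulVec c := by
            rw [hd'def]
            have : (fun j => d j - ε * c j) = d - ε • c := by funext j; simp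
            rw [this, Matrix.mulVec_sub, Matrix.mulVec_smul]
          rw [this]
          have hc : M.mulVec c i = ∑ j ∈ s, M i j := by
            rw [Matrix.mulVec, dotProduct, hsdef, Finset.sum_filter]
            apply Finset.sum_congr rfl
            intro j _
            by_cases hj : j ∈ Z
            · simp [hcdef, hj]
            · simp [hcdef, hj]
          simp [hc]
        have hd'pos : ∀ i, 0 < d' i := by
          intro i
          by_cases hi : i ∈ Z
          · simp [hd'def, hcdef, hi, hd i]
          · have := hεlt i (Finset.mem_filter.mpr ⟨Finset.mem_univ _, hi⟩)
            have h2 : ε < d i := lt_of_lt_of_le this (min_le_left _ _)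
            simp [hd'def, hcdef, hi]
            linarith
        have hsum_le : ∀ i, (∑ j ∈ s, M i j) ≤ A := by
          intro i
          calc ∑ j ∈ s, M i j ≤ ∑ j ∈ s, |M i j| :=
                Finset.sum_le_sum fun j _ => le_abs_self _
            _ ≤ ∑ j, |M i j| := Finset.sum_le_sum_of_subset_of_nonneg
                (Finset.subset_univ _) (fun j _ _ => abs_nonneg _)
            _ ≤ ∑ i', ∑ j, |M i' j| := Finset.single_le_sum
                (f := fun i' => ∑ j, |M i' j|)
                (fun i _ => Finset.sum_nonneg fun j _ => abs_nonneg _) (Finset.mem_univ i)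
            _ ≤ A := by rw [hAdef]; linarith
        have hstrict : ∀ i ∈ s, 0 < M.mulVec d' i := by
          intro i hi
          rw [hmv]
          have h1 := hεlt i hi
          have h2 : ε < M.mulVec d i / A := lt_of_lt_of_le h1 (min_le_right _ _)
          have h3 : ε * (∑ j ∈ s, M i j) ≤ ε * A :=
            mul_le_mul_of_nonneg_left (hsum_le i) (le_of_lt hεpos)
          have h4 : ε * A < M.mulVec d i := by
            rw [← div_mul_cancel₀ (M.mulVec d i) (ne_of_gt hApos)]
            exact mul_lt_mul_of_pos_right h2 hApos
          linarith
        have hsumZ : ∀ i ∈ Z, (∑ j ∈ s, M i j) ≤ 0 := by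
          intro i hiZ
          apply Finset.sum_nonpos
          intro j hj
          have hjZ := (Finset.mem_filter.mp hj).2
          exact hZ i j (fun h => hjZ (h ▸ hiZ))
        have hZnonneg : ∀ i ∈ Z, 0 ≤ M.mulVec d' i := by
          intro i hiZ
          have hmd0 : M.mulVec d i = 0 := (Finset.mem_filter.mp hiZ).2
          rw [hmv, hmd0]
          have : ε * (∑ j ∈ s, M i j) ≤ 0 :=
            mul_nonpos_of_nonneg_of_nonpos hεpos.le (hsumZ i hiZ)
          linarith
        have hNstrict : ∀ i ∈ N, 0 < M.mulVec d' i := by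
          intro i hiN
          have hiZ : i ∈ Z := (Finset.mem_filter.mp hiN).1
          have hmd0 : M.mulVec d i = 0 := (Finset.mem_filter.mp hiZ).2
          rw [hmv, hmd0]
          obtain ⟨j0, hj0Z, hj0ne⟩ := (Finset.mem_filter.mp hiN).2
          have hj0s : j0 ∈ s := Finset.mem_filter.mpr ⟨Finset.mem_univ _, hj0Z⟩
          have hsumneg : (∑ j ∈ s, M i j) < 0 := by
            have h1 : ∀ j ∈ s, M i j ≤ (0:ℝ) := by
              intro j hj
              have hjZ := (Finset.mem_filter.mp hj).2
              exact hZ i j (fun h => hjZ (h ▸ hiZ))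
            have h2 : ∃ j ∈ s, M i j < (0:ℝ) := by
              refine ⟨j0, hj0s, lt_of_le_of_ne (h1 j0 hj0s) hj0ne⟩
            calc (∑ j ∈ s, M i j) < ∑ j ∈ s, (0:ℝ) := Finset.sum_lt_sum h1 h2
              _ = 0 := Finset.sum_const_zero
          have : ε * (∑ j ∈ s, M i j) < 0 := mul_neg_of_pos_of_neg hεpos hsumneg
          linarith
        -- apply IH
        have hnonneg' : ∀ i, 0 ≤ M.mulVec d' i := by
          intro i
          by_cases hi : i ∈ Z
          · exact hZnonneg i hi
          · exact le_of_lt (hstrict i (Finset.mem_filter.mpr ⟨Finset.mem_univ _, hi⟩))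
        have hcard' : (Finset.univ.filter fun i => M.mulVec d' i = 0).card ≤ k := by
          have hsub : (Finset.univ.filter fun i => M.mulVec d' i = 0) ⊆ Z.erase i1 := by
            intro i hi
            have h0 : M.mulVec d' i = 0 := (Finset.mem_filter.mp hi).2
            have hiZ : i ∈ Z := by
              by_contra hiZ
              exact absurd h0 (ne_of_gt (hstrict i
                (Finset.mem_filter.mpr ⟨Finset.mem_univ _, hiZ⟩)))
            refine Finset.mem_erase.mpr ⟨?_, hiZ⟩
            intro heq
            subst heq
            exact absurd h0 (ne_of_gt (hNstrict i hi1))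
          calc (Finset.univ.filter fun i => M.mulVec d' i = 0).card
              ≤ (Z.erase i1).card := Finset.card_le_card hsub
            _ = Z.card - 1 := Finset.card_erase_of_mem (Finset.mem_filter.mp hi1).1
            _ ≤ k := by omega
        exact ih M hZ hdet d' hd'pos hnonneg' hcard'

lemma my_lemD {ι : Type} [Fintype ι] [DecidableEq ι] (M : Matrix ι ι ℝ)
    (hZ : ∀ i j, i ≠ j → M i j ≤ 0) (hdet : M.det ≠ 0)
    (d : ι → ℝ) (hd : ∀ i, 0 < d i) (hMd : ∀ i, 0 ≤ M.mulVec d i) :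
    ∃ d' : ι → ℝ, (∀ i, 0 < d' i) ∧ ∀ i, 0 < M.mulVec d' i :=
  my_lemD_aux _ M hZ hdet d hd hMd le_rfl

lemma my_lemC : ∀ (k : ℕ) (ι : Type) [Fintype ι] [DecidableEq ι], Fintype.card ι ≤ k →
    ∀ (M : Matrix ι ι ℝ), (∀ i j, i ≠ j → M i j ≤ 0) → M.det ≠ 0 →
    (∀ ε : ℝ, 0 < ε → ∃ d : ι → ℝ, (∀ i, 0 < d i) ∧ ∀ i, 0 < M.mulVec d i + ε * d i) →
    ∃ d : ι → ℝ, (∀ i, 0 < d i) ∧ ∀ i, 0 < M.mulVec d i := by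
  intro k
  induction k with
  | zero =>
    intro ι _ _ hcard M _ _ _
    have : IsEmpty ι := Fintype.card_eq_zero_iff.mp (le_antisymm hcard (Nat.zero_le _))
    exact ⟨fun _ => 1, fun i => isEmptyElim i, fun i => isEmptyElim i⟩
  | succ k ih =>
    intro ι _ _ hcard M hZ hdet hsemi
    by_cases hempty : IsEmpty ι
    · exact ⟨fun _ => 1, fun i => isEmptyElim i, fun i => isEmptyElim i⟩
    rw [not_isEmpty_iff] at hempty
    obtain ⟨iW⟩ := hempty
    classical
    have hchoice : ∀ n : ℕ, ∃ d : ι → ℝ, (∀ i, 0 < d i) ∧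
        ∀ i, 0 < M.mulVec d i + (1/(n+1)) * d i := by
      intro n
      exact hsemi (1/(n+1)) (by positivity)
    choose D hD1 hD2 using hchoice
    have hDnorm : ∀ n, 0 < ‖D n‖ := by
      intro n
      rw [norm_pos_iff]
      intro h0
      have := hD1 n iW
      rw [h0] at this
      simp at this
    set e : ℕ → ι → ℝ := fun n => ‖D n‖⁻¹ • D n with hedef
    have he_sphere : ∀ n, e n ∈ Metric.sphere (0 : ι → ℝ) 1 := by
      intro n
      rw [mem_sphere_zero_iff_norm, hedef]
      rw [norm_smul, norm_inv, norm_norm]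
      exact inv_mul_cancel₀ (ne_of_gt (hDnorm n))
    have he1 : ∀ n i, 0 < e n i := fun n i => by
      rw [hedef]; exact mul_pos (inv_pos.mpr (hDnorm n)) (hD1 n i)
    have he2 : ∀ n i, 0 < M.mulVec (e n) i + (1/(n+1)) * e n i := by
      intro n i
      rw [hedef, Matrix.mulVec_smul]
      have : (‖D n‖⁻¹ • M.mulVec (D n)) i + 1/(n+1) * (‖D n‖⁻¹ • D n) i
          = ‖D n‖⁻¹ * (M.mulVec (D n) i + 1/(n+1) * D n i) := by
        simp; ring
      rw [this]
      exact mul_pos (inv_pos.mpr (hDnorm n)) (hD2 n i)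
    obtain ⟨dl, hdl_mem, φ, hφ, hlim⟩ :=
      (isCompact_sphere (0 : ι → ℝ) 1).tendsto_subseq he_sphere
    have hdl_ne : dl ≠ 0 := by
      intro h0
      rw [mem_sphere_zero_iff_norm, h0, norm_zero] at hdl_mem
      norm_num at hdl_mem
    have hlim_coord : ∀ i, Tendsto (fun n => e (φ n) i) atTop (𝓝 (dl i)) := by
      intro i
      exact (tendsto_pi_nhds.mp hlim) i
    have hdl_nonneg : ∀ i, 0 ≤ dl i := fun i =>
      ge_of_tendsto' (hlim_coord i) (fun n => (he1 (φ n) i).le)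
    have hmv_tendsto : ∀ i, Tendsto (fun n => M.mulVec (e (φ n)) i) atTop (𝓝 (M.mulVec dl i)) := by
      intro i
      simp only [Matrix.mulVec, dotProduct]
      exact tendsto_finset_sum _ (fun j _ => tendsto_const_nhds.mul (hlim_coord j))
    have hteps : Tendsto (fun n : ℕ => (1:ℝ)/(φ n + 1)) atTop (𝓝 0) := by
      have h1 : Tendsto (fun n : ℕ => (1:ℝ)/(n + 1)) atTop (𝓝 0) :=
        tendsto_one_div_add_atTop_nhds_zero_nat
      exact h1.comp hφ.tendsto_atTop
    have heps_term : ∀ i, Tendsto (fun n => (1:ℝ)/(φ n + 1) * e (φ n) i) atTop (𝓝 0) := by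
      intro i
      have := hteps.mul (hlim_coord i)
      simpa using this
    have hMdl : ∀ i, 0 ≤ M.mulVec dl i := by
      intro i
      have hsum : Tendsto (fun n => M.mulVec (e (φ n)) i + (1:ℝ)/(φ n + 1) * e (φ n) i)
          atTop (𝓝 (M.mulVec dl i + 0)) := (hmv_tendsto i).add (heps_term i)
      have := ge_of_tendsto' hsum (fun n => (he2 (φ n) i).le)
      simpa using this
    set p : ι → Prop := fun i => 0 < dl i with hpdef
    have hblock : ∀ i j, ¬ p i → p j → M i j = 0 := by
      intro i j hpi hpj
      have hdl0 : dl i = 0 := le_antisymm (not_lt.mp hpi) (hdl_nonneg i)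
      have hnonpos : ∀ j' ∈ Finset.univ, M i j' * dl j' ≤ 0 := by
        intro j' _
        by_cases hij : i = j'
        · rw [← hij, hdl0]; simp
        · exact mul_nonpos_of_nonpos_of_nonneg (hZ i j' hij) (hdl_nonneg j')
      have hsum0 : ∑ j', M i j' * dl j' = 0 := by
        have h2 : 0 ≤ ∑ j', M i j' * dl j' := hMdl i
        have h3 : ∑ j', M i j' * dl j' ≤ 0 := Finset.sum_nonpos hnonpos
        linarith
      have hall := (Finset.sum_eq_zero_iff_of_nonpos hnonpos).mp hsum0
      have := hall j (Finset.mem_univ j)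
      rcases mul_eq_zero.mp this with h | h
      · exact h
      · exact absurd h (ne_of_gt hpj)
    set Mpp := M.submatrix (fun i : {x // p x} => (i : ι)) (fun j : {x // p x} => (j : ι))
      with hMpp
    set Mqq := M.submatrix (fun i : {x // ¬ p x} => (i : ι)) (fun j : {x // ¬ p x} => (j : ι))
      with hMqq
    have hdet_factor := my_det_block M p hblock
    have hdetp : Mpp.det ≠ 0 := fun h => hdet (by rw [hdet_factor, h, zero_mul])
    have hdetq : Mqq.det ≠ 0 := fun h => hdet (by rw [hdet_factor, h, mul_zero])
    obtain ⟨i0, hi0⟩ : ∃ i, p i := by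
      by_contra hc
      push_neg at hc
      apply hdl_ne
      funext i
      exact le_antisymm (not_lt.mp (hc i)) (hdl_nonneg i)
    have hZp : ∀ (i j : {x // p x}), i ≠ j → Mpp i j ≤ 0 := by
      intro i j hij
      exact hZ i j (fun h => hij (Subtype.ext h))
    have hmvp : ∀ i : {x // p x}, Mpp.mulVec (fun j : {x // p x} => dl j) i = M.mulVec dl i := by
      intro i
      simp only [hMpp, Matrix.mulVec, dotProduct, Matrix.submatrix_apply]
      have h1 : ∑ j : {x // p x}, M i j * dl j = ∑ j ∈ Finset.univ.filter p, M (i : ι) j * dl j :=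
        (Finset.sum_subtype _ (fun x => by simp) (fun j => M (i : ι) j * dl j)).symm
      rw [h1]
      refine Finset.sum_subset (Finset.filter_subset _ _) ?_
      intro j _ hj
      simp only [Finset.mem_filter, Finset.mem_univ, true_and] at hj
      rw [le_antisymm (not_lt.mp hj) (hdl_nonneg j), mul_zero]
    obtain ⟨f, hf1, hf2⟩ := my_lemD Mpp hZp hdetp (fun j => dl j)
      (fun j => j.2) (fun i => by rw [hmvp]; exact hMdl i)
    have hcardq : Fintype.card {x // ¬ p x} ≤ k := by
      have h1 := Fintype.card_subtype_compl p
      have h2 : 1 ≤ Fintype.card {x // p x} := Fintype.card_pos_iff.mpr ⟨⟨i0, hi0⟩⟩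
      have h3 : Fintype.card {x // p x} ≤ Fintype.card ι := Fintype.card_subtype_le _
      omega
    have hZq : ∀ (i j : {x // ¬ p x}), i ≠ j → Mqq i j ≤ 0 := by
      intro i j hij
      exact hZ i j (fun h => hij (Subtype.ext h))
    have hsemiq : ∀ ε : ℝ, 0 < ε → ∃ d : {x // ¬ p x} → ℝ,
        (∀ i, 0 < d i) ∧ ∀ i, 0 < Mqq.mulVec d i + ε * d i := by
      intro ε hε
      obtain ⟨d, hd1, hd2⟩ := hsemi ε hε
      refine ⟨fun j => d j, fun j => hd1 j, ?_⟩
      intro i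
      have hsplit : M.mulVec d (i : ι) =
          ∑ j ∈ Finset.univ.filter p, M (i : ι) j * d j
            + ∑ j ∈ Finset.univ.filter (fun x => ¬ p x), M (i : ι) j * d j := by
        rw [Matrix.mulVec, dotProduct,
          ← Finset.sum_filter_add_sum_filter_not Finset.univ p (fun j => M (i : ι) j * d j)]
      have hzero : ∑ j ∈ Finset.univ.filter p, M (i : ι) j * d j = 0 := by
        apply Finset.sum_eq_zero
        intro j hj
        simp only [Finset.mem_filter, Finset.mem_univ, true_and] at hj
        rw [hblock i j i.2 hj, zero_mul]
      have hq : Mqq.mulVec (fun j : {x // ¬ p x} => d j) i =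
          ∑ j ∈ Finset.univ.filter (fun x => ¬ p x), M (i : ι) j * d j := by
        simp only [hMqq, Matrix.mulVec, dotProduct, Matrix.submatrix_apply]
        exact (Finset.sum_subtype _ (fun x => by simp) (fun j => M (i : ι) j * d j)).symm
      have := hd2 i
      rw [hsplit, hzero, zero_add] at this
      rw [hq]
      exact this
    obtain ⟨g, hg1, hg2⟩ := ih {x // ¬ p x} hcardq Mqq hZq hdetq hsemiq
    set r : {x // p x} → ℝ := fun i => ∑ j : {x // ¬ p x}, M i j * g j with hrdef
    set a : {x // p x} → ℝ := Mpp.mulVec f with hadef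
    have ha : ∀ i, 0 < a i := hf2
    have haval : ∀ i : {x // p x}, a i = ∑ j : {x // p x}, M (i : ι) j * f j := by
      intro i
      simp only [hadef, hMpp, Matrix.mulVec, dotProduct, Matrix.submatrix_apply]
    set S : ℝ := ∑ t : {x // p x}, |r t| / a t with hSdef
    have hS0 : (0:ℝ) ≤ S :=
      Finset.sum_nonneg (fun t _ => div_nonneg (abs_nonneg _) (ha t).le)
    set c : ℝ := 1 + S with hcdef
    have hcpos : 0 < c := by rw [hcdef]; linarith
    set d' : ι → ℝ := fun i => if h : p i then c * f ⟨i, h⟩ else g ⟨i, h⟩ with hd'def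
    have hd'pos : ∀ i, 0 < d' i := by
      intro i
      by_cases h : p i
      · have hdi : d' i = c * f ⟨i, h⟩ := by simp only [hd'def]; rw [dif_pos h]
        rw [hdi]; exact mul_pos hcpos (hf1 _)
      · have hdi : d' i = g ⟨i, h⟩ := by simp only [hd'def]; rw [dif_neg h]
        rw [hdi]; exact hg1 _
    refine ⟨d', hd'pos, ?_⟩
    intro i
    have hsplit : M.mulVec d' i =
        ∑ j ∈ Finset.univ.filter p, M i j * d' j
          + ∑ j ∈ Finset.univ.filter (fun x => ¬ p x), M i j * d' j := by
      rw [Matrix.mulVec, dotProduct,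
        ← Finset.sum_filter_add_sum_filter_not Finset.univ p (fun j => M i j * d' j)]
    have hps : ∑ j ∈ Finset.univ.filter p, M i j * d' j
        = c * ∑ j : {x // p x}, M i (j : ι) * f j := by
      rw [Finset.sum_subtype (p := p) (Finset.univ.filter p) (fun x => by simp) (fun j => M i j * d' j),
        Finset.mul_sum]
      apply Finset.sum_congr rfl
      intro j _
      simp only [hd'def]
      rw [dif_pos j.2]
      simp only [Subtype.coe_eta]
      ring
    have hqs : ∑ j ∈ Finset.univ.filter (fun x => ¬ p x), M i j * d' j
        = ∑ j : {x // ¬ p x}, M i (j : ι) * g j := by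
      rw [Finset.sum_subtype (p := fun x => ¬ p x) (Finset.univ.filter (fun x => ¬ p x))
        (fun x => by simp) (fun j => M i j * d' j)]
      apply Finset.sum_congr rfl
      intro j _
      simp only [hd'def]
      rw [dif_neg j.2]
    by_cases h : p i
    · have key : M.mulVec d' i = c * a ⟨i, h⟩ + r ⟨i, h⟩ := by
        rw [hsplit, hps, hqs]
        rfl
      rw [key]
      have hSle : |r ⟨i, h⟩| / a ⟨i, h⟩ ≤ S :=
        Finset.single_le_sum (f := fun t => |r t| / a t)
          (fun t _ => div_nonneg (abs_nonneg _) (ha t).le) (Finset.mem_univ (⟨i, h⟩ : {x // p x}))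
      have h6 : |r ⟨i, h⟩| ≤ S * a ⟨i, h⟩ := by
        rw [← div_mul_cancel₀ |r ⟨i, h⟩| (ne_of_gt (ha ⟨i, h⟩))]
        exact mul_le_mul_of_nonneg_right hSle (ha ⟨i, h⟩).le
      have h7 : -|r ⟨i, h⟩| ≤ r ⟨i, h⟩ := neg_abs_le _
      have h8 : c * a ⟨i, h⟩ = a ⟨i, h⟩ + S * a ⟨i, h⟩ := by rw [hcdef]; ring
      have h9 := ha ⟨i, h⟩
      linarith
    · have hzero : ∑ j : {x // p x}, M i (j : ι) * f j = 0 := by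
        apply Finset.sum_eq_zero
        intro j _
        rw [hblock i j h j.2, zero_mul]
      have key : M.mulVec d' i = Mqq.mulVec g ⟨i, h⟩ := by
        rw [hsplit, hps, hqs, hzero, mul_zero, zero_add]
        simp only [hMqq, Matrix.mulVec, dotProduct, Matrix.submatrix_apply]
      rw [key]
      exact hg2 ⟨i, h⟩

end Aux

section Main
open Polynomial

lemma my_B_diag {m : ℕ} (lo : Fin m → ℝ) (hi : Fin m → Fin m → ℝ) (i : Fin m) :
    boundaryMatrix lo hi i i = lo i := by simp [boundaryMatrix]

lemma my_B_off {m : ℕ} (lo : Fin m → ℝ) (hi : Fin m → Fin m → ℝ) {i j : Fin m} (h : i ≠ j) :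
    boundaryMatrix lo hi i j = -hi i j := by simp [boundaryMatrix, h]

lemma my_B_mulVec {m : ℕ} (lo : Fin m → ℝ) (hi : Fin m → Fin m → ℝ) (d : Fin m → ℝ) (i : Fin m) :
    (boundaryMatrix lo hi).mulVec d i
      = lo i * d i - ∑ j ∈ Finset.univ.erase i, hi i j * d j := by
  rw [Matrix.mulVec, dotProduct,
    ← Finset.add_sum_erase Finset.univ (fun j => boundaryMatrix lo hi i j * d j)
      (Finset.mem_univ i), my_B_diag]
  rw [sub_eq_add_neg, ← Finset.sum_neg_distrib]
  congr 1
  apply Finset.sum_congr rfl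
  intro j hj
  rw [my_B_off lo hi (Finset.ne_of_mem_erase hj).symm]
  ring

/-- From a strictly positive image vector, strict row diagonal dominance for every
matrix satisfying the bounds. -/
lemma my_dom {m : ℕ} (lo : Fin m → ℝ) (hi : Fin m → Fin m → ℝ)
    (hlo : ∀ i, 0 < lo i) (d : Fin m → ℝ) (hd : ∀ i, 0 < d i)
    (hBd : ∀ i, 0 < (boundaryMatrix lo hi).mulVec d i)
    (Υ : Matrix (Fin m) (Fin m) ℝ) (hsat : SatisfiesBounds lo hi Υ) :
    StrictRowDiagDom (Υ * Matrix.diagonal d) := by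
  intro i
  have h1 := hsat.1 i
  have h2 := hsat.2
  have hkey : ∑ j ∈ Finset.univ.erase i, hi i j * d j < lo i * d i := by
    have := hBd i
    rw [my_B_mulVec] at this
    linarith
  calc ∑ j ∈ Finset.univ.erase i, |(Υ * Matrix.diagonal d) i j|
      = ∑ j ∈ Finset.univ.erase i, |Υ i j| * d j := by
        apply Finset.sum_congr rfl
        intro j _
        rw [Matrix.mul_diagonal, abs_mul, abs_of_pos (hd j)]
    _ ≤ ∑ j ∈ Finset.univ.erase i, hi i j * d j :=
        Finset.sum_le_sum (fun j _ => mul_le_mul_of_nonneg_right (h2 i j) (hd j).le)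
    _ < lo i * d i := hkey
    _ ≤ Υ i i * d i := mul_le_mul_of_nonneg_right h1 (hd i).le
    _ ≤ |Υ i i * d i| := le_abs_self _
    _ = |(Υ * Matrix.diagonal d) i i| := by rw [Matrix.mul_diagonal]

/-- Gershgorin-type argument. -/
lemma my_gersh {m : ℕ} (lo : Fin m → ℝ) (hi : Fin m → Fin m → ℝ)
    (hlo : ∀ i, 0 < lo i) (d : Fin m → ℝ) (hd : ∀ i, 0 < d i)
    (hdom : StrictRowDiagDom (boundaryMatrix lo hi * Matrix.diagonal d)) :
    ∀ z : ℂ, ((boundaryMatrix lo hi).map Complex.ofReal).charpoly.IsRoot z → 0 < z.re := by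
  intro z hroot
  have hdom' : ∀ i, ∑ j ∈ Finset.univ.erase i, |boundaryMatrix lo hi i j| * d j < lo i * d i := by
    intro i
    have h := hdom i
    have h1 : ∑ j ∈ Finset.univ.erase i, |(boundaryMatrix lo hi * Matrix.diagonal d) i j|
        = ∑ j ∈ Finset.univ.erase i, |boundaryMatrix lo hi i j| * d j := by
      apply Finset.sum_congr rfl
      intro j _
      rw [Matrix.mul_diagonal, abs_mul, abs_of_pos (hd j)]
    have h2 : |(boundaryMatrix lo hi * Matrix.diagonal d) i i| = lo i * d i := by
      rw [Matrix.mul_diagonal, my_B_diag, abs_of_pos (mul_pos (hlo i) (hd i))]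
    rw [h1, h2] at h
    exact h
  -- eigenvector
  have hdet0 : (Matrix.diagonal (fun _ : Fin m => z) - ((boundaryMatrix lo hi).map Complex.ofReal)).det = 0 := by
    rw [← my_charpoly_eval]
    exact hroot
  obtain ⟨v, hvne, hv⟩ := (Matrix.exists_mulVec_eq_zero_iff).mpr hdet0
  have heig : ∀ i, ((boundaryMatrix lo hi).map Complex.ofReal).mulVec v i = z * v i := by
    intro i
    have := congrFun hv i
    rw [Matrix.sub_mulVec] at this
    have h2 : (Matrix.diagonal (fun _ : Fin m => z)).mulVec v i = z * v i :=
      Matrix.mulVec_diagonal _ _ _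
    simp only [Pi.sub_apply, Pi.zero_apply] at this
    rw [h2] at this
    linear_combination -this
  -- argmax
  obtain ⟨j0, hj0⟩ : ∃ j, v j ≠ 0 := by
    by_contra hc
    push_neg at hc
    exact hvne (funext hc)
  have hne : (Finset.univ : Finset (Fin m)).Nonempty := ⟨j0, Finset.mem_univ _⟩
  obtain ⟨i, _, hmax⟩ := Finset.exists_max_image Finset.univ
    (fun j => ‖v j‖ / d j) hne
  set Q : ℝ := ‖v i‖ / d i with hQdef
  have hQpos : 0 < Q := by
    have h1 : 0 < ‖v j0‖ / d j0 :=
      div_pos (by simpa using hj0) (hd j0)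
    exact lt_of_lt_of_le h1 (hmax j0 (Finset.mem_univ _))
  have hvi : 0 < ‖v i‖ := by
    have : Q * d i = ‖v i‖ := by
      rw [hQdef, div_mul_cancel₀ _ (ne_of_gt (hd i))]
    rw [← this]; exact mul_pos hQpos (hd i)
  have hQj : ∀ j, ‖v j‖ ≤ Q * d j := by
    intro j
    have := hmax j (Finset.mem_univ j)
    exact (div_le_iff₀ (hd j)).mp this
  -- row equation
  have hrow : (z - (lo i : ℂ)) * v i = ∑ j ∈ Finset.univ.erase i, ((boundaryMatrix lo hi).map Complex.ofReal) i j * v j := by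
    have h0 := heig i
    rw [Matrix.mulVec, dotProduct,
      ← Finset.add_sum_erase Finset.univ (fun j => ((boundaryMatrix lo hi).map Complex.ofReal) i j * v j) (Finset.mem_univ i)] at h0
    have hBcii : ((boundaryMatrix lo hi).map Complex.ofReal) i i = (lo i : ℂ) := by
      rw [Matrix.map_apply, my_B_diag]
    rw [hBcii] at h0
    linear_combination -h0
  have habs : ‖z - (lo i : ℂ)‖ * ‖v i‖
      ≤ Q * ∑ j ∈ Finset.univ.erase i, |boundaryMatrix lo hi i j| * d j := by
    rw [← norm_mul, hrow]
    calc ‖∑ j ∈ Finset.univ.erase i, ((boundaryMatrix lo hi).map Complex.ofReal) i j * v j‖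
        ≤ ∑ j ∈ Finset.univ.erase i, ‖((boundaryMatrix lo hi).map Complex.ofReal) i j * v j‖ :=
          norm_sum_le _ _
      _ ≤ ∑ j ∈ Finset.univ.erase i, |boundaryMatrix lo hi i j| * (Q * d j) := by
          apply Finset.sum_le_sum
          intro j _
          rw [norm_mul]
          have hBij : ‖((boundaryMatrix lo hi).map Complex.ofReal) i j‖ = |boundaryMatrix lo hi i j| := by
            rw [Matrix.map_apply, Complex.norm_real, Real.norm_eq_abs]
          rw [hBij]
          exact mul_le_mul_of_nonneg_left (hQj j) (abs_nonneg _)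
      _ = Q * ∑ j ∈ Finset.univ.erase i, |boundaryMatrix lo hi i j| * d j := by
          rw [Finset.mul_sum]
          apply Finset.sum_congr rfl
          intro j _
          ring
  have hfin : ‖z - (lo i : ℂ)‖ * ‖v i‖ < lo i * ‖v i‖ := by
    have h1 : Q * ∑ j ∈ Finset.univ.erase i, |boundaryMatrix lo hi i j| * d j < Q * (lo i * d i) :=
      mul_lt_mul_of_pos_left (hdom' i) hQpos
    have h2 : Q * (lo i * d i) = lo i * ‖v i‖ := by
      have hdne : d i ≠ 0 := ne_of_gt (hd i)
      rw [hQdef]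
      field_simp
    linarith
  have := lt_of_mul_lt_mul_right hfin hvi.le
  exact my_reLt this

/-- determinant of (boundaryMatrix lo hi) + t I is nonzero for t ≥ 0 when (boundaryMatrix lo hi) is an M-matrix -/
lemma my_detnz {m : ℕ} (lo : Fin m → ℝ) (hi : Fin m → Fin m → ℝ)
    (hM : IsMMatrix (boundaryMatrix lo hi)) (t : ℝ) (ht : 0 ≤ t) :
    (boundaryMatrix lo hi + Matrix.diagonal (fun _ => t)).det ≠ 0 := by
  intro hdet0
  have h1 : ((boundaryMatrix lo hi + Matrix.diagonal (fun _ => t)).map Complex.ofReal).det = 0 := by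
    have h := RingHom.map_det Complex.ofRealHom (boundaryMatrix lo hi + Matrix.diagonal (fun _ => t))
    rw [hdet0, map_zero] at h
    exact h.symm
  have hroot : ((boundaryMatrix lo hi).map Complex.ofReal).charpoly.IsRoot ((-t : ℝ) : ℂ) := by
    rw [Polynomial.IsRoot, my_charpoly_eval]
    have heq : (Matrix.diagonal (fun _ : Fin m => ((-t : ℝ) : ℂ)) -(boundaryMatrix lo hi).map Complex.ofReal)
        = - ((boundaryMatrix lo hi + Matrix.diagonal (fun _ => t)).map Complex.ofReal) := by
      ext i j
      by_cases h : i = j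
      · subst h
        simp [Matrix.diagonal_apply_eq, Matrix.map_apply]
        push_cast
        ring
      · simp [Matrix.diagonal_apply_ne _ h, Matrix.map_apply]
    rw [heq, Matrix.det_neg, h1, mul_zero]
  have := hM.2 _ hroot
  rw [Complex.ofReal_re] at this
  linarith

/-- main existence: if (boundaryMatrix lo hi) is an M-matrix, there is d > 0 with (boundaryMatrix lo hi) d > 0 -/
lemma my_main {m : ℕ} (hm : 1 ≤ m) (lo : Fin m → ℝ) (hi : Fin m → Fin m → ℝ)
    (hlo : ∀ i, 0 < lo i) (hhi : ∀ i j, 0 ≤ hi i j)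
    (hM : IsMMatrix (boundaryMatrix lo hi)) :
    ∃ d : Fin m → ℝ, (∀ i, 0 < d i) ∧ ∀ i, 0 < (boundaryMatrix lo hi).mulVec d i := by
  classical
  have hne : Nonempty (Fin m) := ⟨⟨0, hm⟩⟩
  set T : Set ℝ := {t | ∃ d : Fin m → ℝ, (∀ i, 0 < d i) ∧ ∀ i, 0 <(boundaryMatrix lo hi).mulVec d i + t * d i}
    with hTdef
  have hup : ∀ t ∈ T, ∀ t', t ≤ t' → t' ∈ T := by
    rintro t ⟨d, hd, hpos⟩ t' htt'
    refine ⟨d, hd, fun i => ?_⟩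
    have h1 : t * d i ≤ t' * d i := mul_le_mul_of_nonneg_right htt' (hd i).le
    have := hpos i
    linarith
  have ht0 : (∑ i, ∑ j, hi i j) ∈ T := by
    refine ⟨fun _ => 1, fun _ => one_pos, fun i => ?_⟩
    rw [my_B_mulVec]
    have h1 : ∑ j ∈ Finset.univ.erase i, hi i j * 1 ≤ ∑ i, ∑ j, hi i j := by
      calc ∑ j ∈ Finset.univ.erase i, hi i j * 1 = ∑ j ∈ Finset.univ.erase i, hi i j := by
            simp
        _ ≤ ∑ j, hi i j := Finset.sum_le_sum_of_subset_of_nonneg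
            (Finset.erase_subset _ _) (fun j _ _ => hhi i j)
        _ ≤ ∑ i', ∑ j, hi i' j := Finset.single_le_sum
            (f := fun i' => ∑ j, hi i' j)
            (fun i' _ => Finset.sum_nonneg fun j _ => hhi i' j) (Finset.mem_univ i)
    have := hlo i
    simp only [mul_one] at h1 ⊢
    linarith
  by_cases hneg : ∃ t ∈ T, t < 0
  · obtain ⟨t, ht, htneg⟩ := hneg
    obtain ⟨d, hd, hpos⟩ := hup t ht 0 htneg.le
    exact ⟨d, hd, fun i => by have := hpos i; linarith⟩
  · exfalso
    push_neg at hneg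
    have hbdd : BddBelow T := ⟨0, fun t ht => hneg t ht⟩
    have hTne : T.Nonempty := ⟨_, ht0⟩
    set ts := sInf T with hts
    have hts0 : 0 ≤ ts := le_csInf hTne (fun t ht => hneg t ht)
    have hdet := my_detnz lo hi hM ts hts0
    set M : Matrix (Fin m) (Fin m) ℝ := (boundaryMatrix lo hi) + Matrix.diagonal (fun _ => ts) with hMdef
    have hMV : ∀ (d : Fin m → ℝ) (i : Fin m), M.mulVec d i =(boundaryMatrix lo hi).mulVec d i + ts * d i := by
      intro d i
      rw [hMdef, Matrix.add_mulVec]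
      simp [Matrix.mulVec_diagonal]
    have hZ : ∀ i j, i ≠ j → M i j ≤ 0 := by
      intro i j hij
      rw [hMdef]
      simp only [Matrix.add_apply, Matrix.diagonal_apply_ne _ hij, add_zero]
      rw [my_B_off lo hi hij]
      simp [hhi i j]
    have hsemi : ∀ ε : ℝ, 0 < ε → ∃ d : Fin m → ℝ, (∀ i, 0 < d i) ∧
        ∀ i, 0 < M.mulVec d i + ε * d i := by
      intro ε hε
      obtain ⟨t, ht, htlt⟩ := exists_lt_of_csInf_lt hTne
        (show sInf T < ts + ε by rw [← hts]; linarith)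
      obtain ⟨d, hd, hpos⟩ := hup t ht (ts + ε) htlt.le
      refine ⟨d, hd, fun i => ?_⟩
      rw [hMV]
      have := hpos i
      linarith [this]
    obtain ⟨d, hd, hpos⟩ := my_lemC m (Fin m) (le_of_eq (Fintype.card_fin m)) M hZ hdet hsemi
    have htsT : ts ∈ T := ⟨d, hd, fun i => by rw [← hMV]; exact hpos i⟩
    -- ts ∉ T by openness
    obtain ⟨d', hd', hpos'⟩ := htsT
    set δ : ℝ := (Finset.univ.inf' (Finset.univ_nonempty) fun i =>
      ((boundaryMatrix lo hi).mulVec d' i + ts * d' i) / d' i) / 2 with hδdef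
    have hδpos : 0 < δ := by
      rw [hδdef]
      apply div_pos _ two_pos
      rw [Finset.lt_inf'_iff]
      intro i _
      exact div_pos (hpos' i) (hd' i)
    have hmem : ts - δ ∈ T := by
      refine ⟨d', hd', fun i => ?_⟩
      have h1 : δ < ((boundaryMatrix lo hi).mulVec d' i + ts * d' i) / d' i := by
        have h2 : (Finset.univ.inf' (Finset.univ_nonempty) fun i =>
            ((boundaryMatrix lo hi).mulVec d' i + ts * d' i) / d' i) ≤ ((boundaryMatrix lo hi).mulVec d' i + ts * d' i) / d' i :=
          Finset.inf'_le _ (Finset.mem_univ i)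
        have h3 : 0 < (Finset.univ.inf' (Finset.univ_nonempty) fun i =>
            ((boundaryMatrix lo hi).mulVec d' i + ts * d' i) / d' i) := by
          rw [Finset.lt_inf'_iff]
          intro i _
          exact div_pos (hpos' i) (hd' i)
        rw [hδdef]
        linarith
      have h4 : δ * d' i <(boundaryMatrix lo hi).mulVec d' i + ts * d' i := (lt_div_iff₀ (hd' i)).mp h1
      have :(boundaryMatrix lo hi).mulVec d' i + (ts - δ) * d' i = ((boundaryMatrix lo hi).mulVec d' i + ts * d' i) - δ * d' i := by
        ring
      rw [this]
      linarith
    have := csInf_le hbdd hmem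
    rw [← hts] at this
    linarith

end Main

theorem stmt0 {m : ℕ} (hm : 1 ≤ m) (lo : Fin m → ℝ) (hi : Fin m → Fin m → ℝ)
    (hlo : ∀ i, 0 < lo i) (hhi : ∀ i j, 0 ≤ hi i j) (hdiag : ∀ i, lo i ≤ hi i i) :
    (IsMMatrix (boundaryMatrix lo hi) ↔
      ∀ Υ : Matrix (Fin m) (Fin m) ℝ, SatisfiesBounds lo hi Υ →
        (∀ i, 0 < Υ i i) ∧
        ∃ d : Fin m → ℝ, (∀ i, 0 < d i) ∧
          StrictRowDiagDom (Υ * Matrix.diagonal d)) ∧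
    (IsMMatrix (boundaryMatrix lo hi) →
      ∃ d : Fin m → ℝ, (∀ i, 0 < d i) ∧
        ∀ Υ : Matrix (Fin m) (Fin m) ℝ, SatisfiesBounds lo hi Υ →
          StrictRowDiagDom (Υ * Matrix.diagonal d)) := by
  constructor
  · constructor
    · intro hM Υ hsat
      obtain ⟨d, hd, hBd⟩ := my_main hm lo hi hlo hhi hM
      refine ⟨fun i => lt_of_lt_of_le (hlo i) (hsat.1 i), d, hd, ?_⟩
      exact my_dom lo hi hlo d hd hBd Υ hsat
    · intro h
      have hsatB : SatisfiesBounds lo hi (boundaryMatrix lo hi) := by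
        constructor
        · intro i; rw [my_B_diag]
        · intro i j
          by_cases hij : i = j
          · subst hij
            rw [my_B_diag, abs_of_pos (hlo i)]
            exact hdiag i
          · rw [my_B_off lo hi hij, abs_neg, abs_of_nonneg (hhi i j)]
      obtain ⟨_, d, hd, hdom⟩ := h (boundaryMatrix lo hi) hsatB
      constructor
      · intro i j hij
        rw [my_B_off lo hi hij]
        simp [hhi i j]
      · exact my_gersh lo hi hlo d hd hdom
  · intro hM
    obtain ⟨d, hd, hBd⟩ := my_main hm lo hi hlo hhi hM
    exact ⟨d, hd, fun Υ hsat => my_dom lo hi hlo d hd hBd Υ hsat⟩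
end

section
/- Let l ∈ [−1,0] and suppose the boundary matrix B is an M-matrix. Then there exist a positive diagonal matrix P = diag(p_1,…,p_m) and a matrix 𝒦 = [k_{ij}] ∈ ℝ^{m×m} with positive diagonal entries (k_{ii} > 0 for all i) such that for every matrix Υ satisfying the interval bounds and every x ∈ ℝ^m with x ≠ 0 one has ⌈x⌋^{1+l,T} P Υ 𝒦 x = Σ_{i,j} |x_i|^{1+l} sign(x_i) · (P Υ 𝒦)_{ij} · x_j > 0. -/
open Matrix BigOperators Finset

/-- Signed power: ⌈x⌋^d = |x|^d · sign x. -/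
noncomputable def spow (x d : ℝ) : ℝ := |x| ^ d * Real.sign x

lemma charpoly_eval_aux {n : ℕ} (M : Matrix (Fin n) (Fin n) ℂ) (r : ℂ) :
    M.charpoly.eval r = (Matrix.scalar (Fin n) r - M).det := by
  rw [Matrix.charpoly, _root_.eval_det, Matrix.matPolyEquiv_charmatrix]
  simp

lemma charpoly_transpose_eq {n : ℕ} {R : Type*} [CommRing R] (M : Matrix (Fin n) (Fin n) R) :
    Mᵀ.charpoly = M.charpoly := by
  have h : Matrix.charmatrix Mᵀ = (Matrix.charmatrix M)ᵀ := by
    ext i j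
    by_cases h : i = j
    · subst h; simp
    · rw [Matrix.transpose_apply, Matrix.charmatrix_apply_ne _ _ _ h,
        Matrix.charmatrix_apply_ne _ _ _ (Ne.symm h), Matrix.transpose_apply]
  rw [Matrix.charpoly, Matrix.charpoly, h, Matrix.det_transpose]

/-- If `A` has nonpositive off-diagonal entries, positive diagonal entries, and all complex
eigenvalues with positive real part, then `A e = 1` has a positive solution. -/
lemma posSolution {n : ℕ} (A : Matrix (Fin n) (Fin n) ℝ)
    (hoff : ∀ i j, i ≠ j → A i j ≤ 0) (hdg : ∀ i, 0 < A i i)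
    (hroot : ∀ z : ℂ, (A.map Complex.ofReal).charpoly.IsRoot z → 0 < z.re) :
    ∃ e : Fin n → ℝ, (∀ i, 0 < e i) ∧ A *ᵥ e = fun _ => 1 := by
  set F : ℝ → Matrix (Fin n) (Fin n) ℝ := fun σ => σ • A + (1 - σ) • 1 with hF
  have hF0 : F 0 = 1 := by simp [hF]
  have hF1 : F 1 = A := by simp [hF]
  have hdet : ∀ σ ∈ Set.Icc (0:ℝ) 1, (F σ).det ≠ 0 := by
    rintro σ ⟨hσ0, hσ1⟩ hd
    rcases eq_or_lt_of_le hσ0 with h0 | h0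
    · rw [← h0, hF0, Matrix.det_one] at hd; exact one_ne_zero hd
    · set μ : ℝ := -((1 - σ)/σ) with hμ
      have hmap : (F σ).map (Complex.ofReal) =
          (σ : ℂ) • (A.map Complex.ofReal) + ((1 : ℂ) - σ) • 1 := by
        ext i j
        by_cases h : i = j <;>
          simp [hF, Matrix.one_apply, h, smul_eq_mul]
      have hσc : (σ : ℂ) ≠ 0 := by exact_mod_cast h0.ne'
      have hkey : (σ : ℂ) • (Matrix.scalar (Fin n) (μ : ℂ) - A.map Complex.ofReal) =
          -((F σ).map Complex.ofReal) := by
        rw [hmap]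
        ext i j
        by_cases h : i = j
        · simp only [Matrix.smul_apply, Matrix.sub_apply, Matrix.scalar_apply,
            Matrix.diagonal_apply_eq, Matrix.neg_apply, Matrix.add_apply, Matrix.one_apply_eq, h,
            smul_eq_mul, hμ]
          push_cast
          field_simp
          ring
        · simp [Matrix.scalar_apply, Matrix.diagonal_apply, Matrix.one_apply, h, smul_eq_mul]
      have hdc : ((F σ).map Complex.ofReal).det = 0 := by
        have : ((F σ).map Complex.ofReal).det = ((F σ).det : ℂ) := by
          rw [show (F σ).map Complex.ofReal = (Complex.ofRealHom).mapMatrix (F σ) from rfl,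
            ← RingHom.map_det]
          rfl
        rw [this, hd]; norm_num
      have hdet2 : (Matrix.scalar (Fin n) (μ : ℂ) - A.map Complex.ofReal).det = 0 := by
        have h1 := congrArg Matrix.det hkey
        rw [Matrix.det_smul, Matrix.det_neg, hdc, mul_zero] at h1
        have hσne : (σ : ℂ) ^ (Fintype.card (Fin n)) ≠ 0 := pow_ne_zero _ hσc
        exact (mul_eq_zero.mp h1).resolve_left hσne
      have hr := hroot (μ : ℂ) (by
        rw [Polynomial.IsRoot, charpoly_eval_aux]; exact hdet2)
      rw [Complex.ofReal_re] at hr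
      have : μ ≤ 0 := by
        rw [hμ]; simp only [neg_nonpos]
        exact div_nonneg (by linarith) hσ0
      linarith
  set g : ℝ → Fin n → ℝ :=
    fun σ => ((F σ).det)⁻¹ • ((F σ).adjugate *ᵥ fun _ => 1) with hg
  have hsol : ∀ σ ∈ Set.Icc (0:ℝ) 1, F σ *ᵥ g σ = fun _ => 1 := by
    intro σ hσ
    rw [hg]
    simp only
    rw [Matrix.mulVec_smul, Matrix.mulVec_mulVec, Matrix.mul_adjugate,
      Matrix.smul_mulVec, Matrix.one_mulVec, smul_smul,
      inv_mul_cancel₀ (hdet σ hσ), one_smul]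
  have hFoff : ∀ σ ∈ Set.Icc (0:ℝ) 1, ∀ i j, i ≠ j → F σ i j ≤ 0 := by
    rintro σ ⟨hσ0, _⟩ i j hij
    simp only [hF, Matrix.add_apply, Matrix.smul_apply, Matrix.one_apply_ne hij,
      smul_eq_mul, mul_zero, add_zero]
    exact mul_nonpos_of_nonneg_of_nonpos hσ0 (hoff i j hij)
  have hFdiag : ∀ σ ∈ Set.Icc (0:ℝ) 1, ∀ i, 0 < F σ i i := by
    rintro σ ⟨hσ0, hσ1⟩ i
    simp only [hF, Matrix.add_apply, Matrix.smul_apply, Matrix.one_apply_eq, smul_eq_mul, mul_one]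
    rcases eq_or_lt_of_le hσ0 with h0 | h0
    · rw [← h0]; norm_num
    · have := mul_pos h0 (hdg i); linarith
  have hstrict : ∀ σ ∈ Set.Icc (0:ℝ) 1, (∀ i, 0 ≤ g σ i) → ∀ i, 0 < g σ i := by
    intro σ hσ hnn i
    have h1 := congrFun (hsol σ hσ) i
    rw [Matrix.mulVec, dotProduct] at h1
    have hsplit : ∑ j, F σ i j * g σ j
        = F σ i i * g σ i + ∑ j ∈ univ.erase i, F σ i j * g σ j :=
      (Finset.add_sum_erase _ (fun j => F σ i j * g σ j) (mem_univ i)).symm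
    have hrest : ∑ j ∈ univ.erase i, F σ i j * g σ j ≤ 0 := by
      apply Finset.sum_nonpos
      intro j hj
      exact mul_nonpos_of_nonpos_of_nonneg
        (hFoff σ hσ i j (Finset.ne_of_mem_erase hj).symm) (hnn j)
    have hii := hFdiag σ hσ i
    have : (1:ℝ) ≤ F σ i i * g σ i := by rw [hsplit] at h1; linarith
    nlinarith [hnn i]
  have hFc : Continuous F := by
    apply continuous_matrix
    intro i j
    simp only [hF, Matrix.add_apply, Matrix.smul_apply, smul_eq_mul]
    fun_prop
  have hgc : ContinuousOn g (Set.Icc (0:ℝ) 1) := by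
    intro σ hσ
    apply ContinuousAt.continuousWithinAt
    exact (hFc.matrix_det.continuousAt.inv₀ (hdet σ hσ)).smul
      ((hFc.matrix_adjugate.matrix_mulVec continuous_const).continuousAt)
  haveI : ConnectedSpace (Set.Icc (0:ℝ) 1) := Subtype.connectedSpace (isConnected_Icc zero_le_one)
  set S : Set (Set.Icc (0:ℝ) 1) := {σ | ∀ i, 0 ≤ g σ.1 i} with hS
  have hGc : Continuous fun σ : Set.Icc (0:ℝ) 1 => g σ.1 := hgc.restrict
  have hSclosed : IsClosed S := by
    have : S = ⋂ i, (fun σ : Set.Icc (0:ℝ) 1 => g σ.1 i) ⁻¹' (Set.Ici 0) := by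
      ext σ; simp [hS, Set.mem_iInter]
    rw [this]
    exact isClosed_iInter fun i => (isClosed_Ici).preimage ((continuous_apply i).comp hGc)
  have hSopen : IsOpen S := by
    have : S = ⋂ i, (fun σ : Set.Icc (0:ℝ) 1 => g σ.1 i) ⁻¹' (Set.Ioi 0) := by
      ext σ
      constructor
      · intro hσ
        simp only [Set.mem_iInter, Set.mem_preimage, Set.mem_Ioi]
        exact fun i => hstrict σ.1 σ.2 hσ i
      · intro hσ i
        exact le_of_lt (Set.mem_iInter.mp hσ i)
    rw [this]
    exact isOpen_iInter_of_finite fun i => (isOpen_Ioi).preimage ((continuous_apply i).comp hGc)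
  have h0mem : (⟨0, by norm_num⟩ : Set.Icc (0:ℝ) 1) ∈ S := by
    intro i
    simp [hg, hF0, Matrix.adjugate_one, Matrix.one_mulVec]
  have hSuniv : S = Set.univ := IsClopen.eq_univ ⟨hSclosed, hSopen⟩ ⟨_, h0mem⟩
  have h1mem : (⟨1, by norm_num⟩ : Set.Icc (0:ℝ) 1) ∈ S := by rw [hSuniv]; trivial
  have h1Icc : (1:ℝ) ∈ Set.Icc (0:ℝ) 1 := by norm_num
  refine ⟨g 1, hstrict 1 h1Icc h1mem, ?_⟩
  rw [← hF1]
  exact hsol 1 h1Icc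

lemma sign_mul_self' (x : ℝ) : Real.sign x * x = |x| := by
  rcases lt_trichotomy x 0 with h | h | h
  · rw [Real.sign_of_neg h, abs_of_neg h]; ring
  · simp [h]
  · rw [Real.sign_of_pos h, abs_of_pos h]; ring

lemma spow_mul_self {a : ℝ} (ha : 0 ≤ a) (x : ℝ) : spow x a * x = |x| ^ (1 + a) := by
  rw [spow, mul_assoc, sign_mul_self']
  rcases eq_or_ne x 0 with h | h
  · subst h
    rw [abs_zero, mul_zero, Real.zero_rpow (by linarith : (1:ℝ) + a ≠ 0)]
  · rw [Real.rpow_add (abs_pos.2 h), Real.rpow_one]; ring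

lemma abs_spow_le (x a : ℝ) : |spow x a| ≤ |x| ^ a := by
  rw [spow, abs_mul, abs_of_nonneg (Real.rpow_nonneg (abs_nonneg x) a)]
  apply mul_le_of_le_one_right (Real.rpow_nonneg (abs_nonneg x) a)
  rcases lt_trichotomy x 0 with h | h | h
  · rw [Real.sign_of_neg h]; norm_num
  · simp [h]
  · rw [Real.sign_of_pos h]; norm_num

lemma young_ineq {a : ℝ} (ha : 0 ≤ a) {s t : ℝ} (hs : 0 ≤ s) (ht : 0 ≤ t) :
    s ^ a * t ≤ a/(1+a) * s^(1+a) + 1/(1+a) * t^(1+a) := by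
  have h1a : (0:ℝ) < 1 + a := by linarith
  have h := Real.geom_mean_le_arith_mean2_weighted
    (div_nonneg ha h1a.le) (div_nonneg zero_le_one h1a.le)
    (Real.rpow_nonneg hs (1+a)) (Real.rpow_nonneg ht (1+a))
    (by field_simp; ring)
  calc s ^ a * t = (s^(1+a)) ^ (a/(1+a)) * (t^(1+a)) ^ (1/(1+a)) := by
        rw [← Real.rpow_mul hs, ← Real.rpow_mul ht,
          show (1+a) * (a/(1+a)) = a by field_simp,
          show (1+a) * (1/(1+a)) = 1 by field_simp, Real.rpow_one]
    _ ≤ a/(1+a) * s^(1+a) + 1/(1+a) * t^(1+a) := h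

theorem stmt1 {m : ℕ} (hm : 1 ≤ m) (l : ℝ) (hl : l ∈ Set.Icc (-1 : ℝ) 0)
    (lo : Fin m → ℝ) (hi : Fin m → Fin m → ℝ)
    (hlo : ∀ i, 0 < lo i) (hhi : ∀ i j, 0 ≤ hi i j) (hdiag : ∀ i, lo i ≤ hi i i)
    (hB : IsMMatrix (boundaryMatrix lo hi)) :
    ∃ (p : Fin m → ℝ) (K : Matrix (Fin m) (Fin m) ℝ),
      (∀ i, 0 < p i) ∧ (∀ i, 0 < K i i) ∧
      ∀ Υ : Matrix (Fin m) (Fin m) ℝ, SatisfiesBounds lo hi Υ →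
        ∀ x : Fin m → ℝ, x ≠ 0 →
          0 < ∑ i, ∑ j, spow (x i) (1 + l) * ((Matrix.diagonal p * Υ * K) i j) * x j := by
  obtain ⟨hoffB, hrootB⟩ := hB
  have hBdiag : ∀ i, boundaryMatrix lo hi i i = lo i := by
    intro i; simp [boundaryMatrix]
  obtain ⟨e, he, hBe⟩ := posSolution (boundaryMatrix lo hi) hoffB
    (fun i => by rw [hBdiag]; exact hlo i) hrootB
  have hrootBT : ∀ z : ℂ,
      ((boundaryMatrix lo hi)ᵀ.map Complex.ofReal).charpoly.IsRoot z → 0 < z.re := by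
    intro z hz
    apply hrootB z
    rwa [Matrix.transpose_map, charpoly_transpose_eq] at hz
  obtain ⟨q, hq, hBq⟩ := posSolution (boundaryMatrix lo hi)ᵀ
    (fun i j hij => hoffB j i hij.symm)
    (fun i => by rw [Matrix.transpose_apply, hBdiag]; exact hlo i) hrootBT
  have hrow : ∀ i, ∑ j, (if i = j then 0 else hi i j * e j) = lo i * e i - 1 := by
    intro i
    have h1 := congrFun hBe i
    rw [Matrix.mulVec, dotProduct] at h1
    have h2 : ∀ j : Fin m, boundaryMatrix lo hi i j * e j
        = (if i = j then lo i * e i else 0) - (if i = j then 0 else hi i j * e j) := by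
      intro j
      simp only [boundaryMatrix, Matrix.of_apply]
      split_ifs with h
      · rw [h]; ring
      · ring
    rw [Finset.sum_congr rfl fun j _ => h2 j, Finset.sum_sub_distrib,
      Finset.sum_ite_eq univ i fun _ => lo i * e i] at h1
    simp only [mem_univ, if_true] at h1
    linarith
  have hcol : ∀ j, ∑ i, (if i = j then 0 else q i * hi i j) = q j * lo j - 1 := by
    intro j
    have h1 := congrFun hBq j
    rw [Matrix.mulVec, dotProduct] at h1
    have h2 : ∀ i : Fin m, (boundaryMatrix lo hi)ᵀ j i * q i
        = (if i = j then q j * lo j else 0) - (if i = j then 0 else q i * hi i j) := by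
      intro i
      simp only [Matrix.transpose_apply, boundaryMatrix, Matrix.of_apply]
      split_ifs with h
      · rw [h]; ring
      · ring
    rw [Finset.sum_congr rfl fun i _ => h2 i, Finset.sum_sub_distrib,
      Finset.sum_ite_eq' univ j fun _ => q j * lo j] at h1
    simp only [mem_univ, if_true] at h1
    linarith
  refine ⟨q, Matrix.diagonal e, hq, fun i => by simpa using he i, ?_⟩
  intro Υ hΥ x hx
  set a : ℝ := 1 + l with ha_def
  have ha : 0 ≤ a := by rw [ha_def]; linarith [hl.1]
  have h1a : (0:ℝ) < 1 + a := by linarith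
  have hvnn : ∀ k : Fin m, (0:ℝ) ≤ |x k| ^ (1 + a) :=
    fun k => Real.rpow_nonneg (abs_nonneg _) _
  have key1 : ∀ i j : Fin m, (if i = j then q i * lo i * e i * |x i| ^ (1+a)
        else -(q i * (hi i j * e j) * (|x i| ^ a * |x j|)))
      ≤ spow (x i) a * (q i * Υ i j * e j) * x j := by
    intro i j
    by_cases h : i = j
    · subst h
      rw [if_pos rfl]
      have h1 : spow (x i) a * (q i * Υ i i * e i) * x i
          = (q i * Υ i i * e i) * (spow (x i) a * x i) := by ring
      rw [h1, spow_mul_self ha]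
      have h2 : q i * lo i * e i ≤ q i * Υ i i * e i := by
        nlinarith [mul_nonneg (mul_nonneg (sub_nonneg.2 (hΥ.1 i)) (hq i).le) (he i).le]
      calc q i * lo i * e i * |x i| ^ (1+a) ≤ q i * Υ i i * e i * |x i| ^ (1+a) :=
            mul_le_mul_of_nonneg_right h2 (hvnn i)
        _ = (q i * Υ i i * e i) * |x i| ^ (1+a) := by ring
    · rw [if_neg h]
      have habs : |spow (x i) a * (q i * Υ i j * e j) * x j|
          ≤ |x i| ^ a * (q i * (hi i j * e j)) * |x j| := by
        rw [abs_mul, abs_mul]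
        have h2 := abs_spow_le (x i) a
        have h3 : |q i * Υ i j * e j| ≤ q i * (hi i j * e j) := by
          rw [abs_mul, abs_mul, abs_of_pos (hq i), abs_of_pos (he j)]
          calc q i * |Υ i j| * e j ≤ q i * hi i j * e j := by
                nlinarith [mul_nonneg (mul_nonneg (sub_nonneg.2 (hΥ.2 i j)) (hq i).le)
                  (he j).le]
            _ = q i * (hi i j * e j) := by ring
        exact mul_le_mul_of_nonneg_right
          (mul_le_mul h2 h3 (abs_nonneg _) (Real.rpow_nonneg (abs_nonneg _) a)) (abs_nonneg _)
      calc -(q i * (hi i j * e j) * (|x i| ^ a * |x j|))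
          = -(|x i| ^ a * (q i * (hi i j * e j)) * |x j|) := by ring
        _ ≤ -|spow (x i) a * (q i * Υ i j * e j) * x j| := neg_le_neg habs
        _ ≤ spow (x i) a * (q i * Υ i j * e j) * x j := neg_abs_le _
  have key2 : ∀ i j : Fin m, ((if i = j then q i * lo i * e i * |x i| ^ (1+a) else 0)
        - a/(1+a) * ((if i = j then 0 else q i * (hi i j * e j)) * |x i| ^ (1+a))
        - 1/(1+a) * ((if i = j then 0 else q i * (hi i j * e j)) * |x j| ^ (1+a)))
      ≤ (if i = j then q i * lo i * e i * |x i| ^ (1+a)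
        else -(q i * (hi i j * e j) * (|x i| ^ a * |x j|))) := by
    intro i j
    by_cases h : i = j
    · simp [h]
    · simp only [if_neg h]
      have hc : 0 ≤ q i * (hi i j * e j) :=
        mul_nonneg (hq i).le (mul_nonneg (hhi i j) (he j).le)
      have hy := young_ineq ha (abs_nonneg (x i)) (abs_nonneg (x j))
      nlinarith [mul_le_mul_of_nonneg_left hy hc]
  have hsum1 : ∑ i : Fin m, ∑ j : Fin m,
        (if i = j then q i * lo i * e i * |x i| ^ (1+a) else (0:ℝ))
      = ∑ k, q k * lo k * e k * |x k| ^ (1+a) := by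
    apply Finset.sum_congr rfl
    intro i _
    rw [Finset.sum_ite_eq univ i fun _ => q i * lo i * e i * |x i| ^ (1+a)]
    simp
  have hsum2 : ∑ i : Fin m, ∑ j : Fin m,
        a/(1+a) * ((if i = j then 0 else q i * (hi i j * e j)) * |x i| ^ (1+a))
      = ∑ k, a/(1+a) * (q k * (lo k * e k - 1) * |x k| ^ (1+a)) := by
    apply Finset.sum_congr rfl
    intro i _
    calc ∑ j, a/(1+a) * ((if i = j then 0 else q i * (hi i j * e j)) * |x i| ^ (1+a))
        = ∑ j, (a/(1+a) * q i * |x i| ^ (1+a)) * (if i = j then 0 else hi i j * e j) := by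
          refine Finset.sum_congr rfl fun j _ => ?_
          split <;> ring
      _ = (a/(1+a) * q i * |x i| ^ (1+a)) * (lo i * e i - 1) := by
          rw [← Finset.mul_sum, hrow i]
      _ = a/(1+a) * (q i * (lo i * e i - 1) * |x i| ^ (1+a)) := by ring
  have hsum3 : ∑ i : Fin m, ∑ j : Fin m,
        1/(1+a) * ((if i = j then 0 else q i * (hi i j * e j)) * |x j| ^ (1+a))
      = ∑ k, 1/(1+a) * (e k * (q k * lo k - 1) * |x k| ^ (1+a)) := by
    rw [Finset.sum_comm]
    apply Finset.sum_congr rfl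
    intro j _
    calc ∑ i, 1/(1+a) * ((if i = j then 0 else q i * (hi i j * e j)) * |x j| ^ (1+a))
        = ∑ i, (1/(1+a) * e j * |x j| ^ (1+a)) * (if i = j then 0 else q i * hi i j) := by
          refine Finset.sum_congr rfl fun i _ => ?_
          split <;> ring
      _ = (1/(1+a) * e j * |x j| ^ (1+a)) * (q j * lo j - 1) := by
          rw [← Finset.mul_sum, hcol j]
      _ = 1/(1+a) * (e j * (q j * lo j - 1) * |x j| ^ (1+a)) := by ring
  have hcomb : ∑ k, ((a * q k + e k)/(1+a)) * |x k| ^ (1+a)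
      = ∑ k, (q k * lo k * e k * |x k| ^ (1+a)
          - a/(1+a) * (q k * (lo k * e k - 1) * |x k| ^ (1+a))
          - 1/(1+a) * (e k * (q k * lo k - 1) * |x k| ^ (1+a))) := by
    refine Finset.sum_congr rfl fun k _ => ?_
    field_simp
    ring
  have hposum : 0 < ∑ k, ((a * q k + e k)/(1+a)) * |x k| ^ (1+a) := by
    obtain ⟨k0, hk0⟩ := Function.ne_iff.mp hx
    apply Finset.sum_pos'
    · intro k _
      exact mul_nonneg (div_nonneg
        (add_nonneg (mul_nonneg ha (hq k).le) (he k).le) h1a.le) (hvnn k)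
    · exact ⟨k0, mem_univ _, mul_pos (div_pos
        (add_pos_of_nonneg_of_pos (mul_nonneg ha (hq k0).le) (he k0)) h1a)
        (Real.rpow_pos_of_pos (abs_pos.2 hk0) _)⟩
  calc (0:ℝ) < ∑ k, ((a * q k + e k)/(1+a)) * |x k| ^ (1+a) := hposum
    _ = ∑ i : Fin m, ∑ j : Fin m,
          ((if i = j then q i * lo i * e i * |x i| ^ (1+a) else 0)
          - a/(1+a) * ((if i = j then 0 else q i * (hi i j * e j)) * |x i| ^ (1+a))
          - 1/(1+a) * ((if i = j then 0 else q i * (hi i j * e j)) * |x j| ^ (1+a))) := by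
        rw [hcomb]
        simp only [Finset.sum_sub_distrib]
        rw [hsum1, hsum2, hsum3]
    _ ≤ ∑ i : Fin m, ∑ j : Fin m, (if i = j then q i * lo i * e i * |x i| ^ (1+a)
          else -(q i * (hi i j * e j) * (|x i| ^ a * |x j|))) :=
        Finset.sum_le_sum fun i _ => Finset.sum_le_sum fun j _ => key2 i j
    _ ≤ ∑ i : Fin m, ∑ j : Fin m, spow (x i) a * (q i * Υ i j * e j) * x j :=
        Finset.sum_le_sum fun i _ => Finset.sum_le_sum fun j _ => key1 i j
    _ = ∑ i, ∑ j, spow (x i) a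
          * ((Matrix.diagonal q * Υ * Matrix.diagonal e) i j) * x j := by
        simp only [Matrix.mul_diagonal, Matrix.diagonal_mul]
end

section
/- Let l ∈ [−1,0], let P = diag(p_1,…,p_m) be a positive diagonal matrix, let K_d = diag(k_{11},…,k_{mm}) be a positive diagonal matrix, and let Υ satisfy the interval bounds with boundary matrix B. Define H_d = ((1+l)/(2+l))·P B K_d + (1/(2+l))·K_d Bᵀ P. Then for every x ∈ ℝ^m: ⌈x⌋^{1+l,T} P Υ K_d x ≥ Σ_{i=1}^m Σ_{j=1}^m |x_i|^{2+l} (H_d)_{ij}. -/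
open Matrix BigOperators Finset

/-!
Each term `⌈x_i⌋^r p_i υ_ij k_j x_j` (with `r = 1 + l`) is bounded below termwise. On the
diagonal it equals `|x_i|^(r+1) p_i υ_ii k_i ≥ |x_i|^(r+1) p_i υ̲_i k_i`. Off the diagonal it is
at least `-|x_i|^r |x_j| p_i ῡ_ij k_j`, and weighted AM–GM (Young) gives
`|x_i|^r |x_j| ≤ r/(r+1) |x_i|^(r+1) + 1/(r+1) |x_j|^(r+1)`. Summing, and moving the second
Young weight onto the transposed entry by swapping the summation indices, yields `H_d`.
-/

lemma Real.sign_mul_self_eq_abs (u : ℝ) : Real.sign u * u = |u| := by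
  rcases lt_trichotomy u 0 with h | rfl | h
  · rw [Real.sign_of_neg h, abs_of_neg h]; ring
  · simp
  · rw [Real.sign_of_pos h, abs_of_pos h, one_mul]

lemma abs_spow_le_s3 (u d : ℝ) : |spow u d| ≤ |u| ^ d := by
  have hsign : |Real.sign u| ≤ 1 := by
    rcases Real.sign_apply_eq u with h | h | h <;> simp [h]
  rw [spow, abs_mul, abs_of_nonneg (by positivity)]
  exact mul_le_of_le_one_right (by positivity) hsign

lemma spow_mul_self_s3 (u : ℝ) {d : ℝ} (hd : d + 1 ≠ 0) : spow u d * u = |u| ^ (d + 1) := by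
  rcases eq_or_ne u 0 with rfl | hu
  · simp [spow, Real.zero_rpow hd]
  · rw [spow, mul_assoc, Real.sign_mul_self_eq_abs, Real.rpow_add_one (abs_ne_zero.2 hu)]

/-- Young's inequality with exponents `(r+1)/r` and `r+1`, via weighted AM–GM so that `r = 0` is
allowed. -/
lemma rpow_mul_le_weighted_rpow_add {r u v : ℝ} (hr : 0 ≤ r) (hu : 0 ≤ u) (hv : 0 ≤ v) :
    u ^ r * v ≤ r / (r + 1) * u ^ (r + 1) + 1 / (r + 1) * v ^ (r + 1) := by
  have hr1 : r + 1 ≠ 0 := by positivity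
  have hu' : u ^ r = (u ^ (r + 1)) ^ (r / (r + 1)) := by
    rw [← Real.rpow_mul hu, mul_div_cancel₀ r hr1]
  have hv' : v = (v ^ (r + 1)) ^ (1 / (r + 1)) := by
    rw [← Real.rpow_mul hv, mul_one_div_cancel hr1, Real.rpow_one]
  conv_lhs => rw [hu', hv']
  exact Real.geom_mean_le_arith_mean2_weighted (by positivity) (by positivity)
    (by positivity) (by positivity) (by field_simp)

lemma sum_sum_mul_add_transpose {ι R : Type*} [Fintype ι] [CommSemiring R] (w : ι → R)
    (a b : R) (M : Matrix ι ι R) :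
    ∑ i, ∑ j, w i * (a * M i j + b * M j i) = ∑ i, ∑ j, (a * w i + b * w j) * M i j := by
  have hswap : ∑ i, ∑ j, w i * (b * M j i) = ∑ i, ∑ j, b * w j * M i j := by
    rw [Finset.sum_comm]
    exact Finset.sum_congr rfl fun _ _ => Finset.sum_congr rfl fun _ _ => by ring
  simp only [mul_add, add_mul, Finset.sum_add_distrib, hswap]
  congr 1
  exact Finset.sum_congr rfl fun _ _ => Finset.sum_congr rfl fun _ _ => by ring

lemma diagonal_mul_mul_diagonal_apply {ι R : Type*} [Fintype ι] [DecidableEq ι] [Semiring R]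
    (p k : ι → R) (A : Matrix ι ι R) (i j : ι) :
    (diagonal p * A * diagonal k) i j = p i * A i j * k j := by
  rw [mul_diagonal, diagonal_mul]

lemma boundaryMatrix_term_le {m : ℕ} {lo : Fin m → ℝ} {hi : Fin m → Fin m → ℝ}
    (hhi : ∀ i j, 0 ≤ hi i j) {Υ : Matrix (Fin m) (Fin m) ℝ} (hΥ : SatisfiesBounds lo hi Υ)
    {r : ℝ} (hr : 0 ≤ r) (x : Fin m → ℝ) (i j : Fin m) :
    (r / (r + 1) * |x i| ^ (r + 1) + 1 / (r + 1) * |x j| ^ (r + 1)) * boundaryMatrix lo hi i j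
      ≤ spow (x i) r * Υ i j * x j := by
  rcases eq_or_ne i j with rfl | hij
  · have hweights : r / (r + 1) + 1 / (r + 1) = 1 := by field_simp
    rw [← add_mul, hweights, one_mul, mul_right_comm, spow_mul_self_s3 _ (by positivity)]
    simpa [boundaryMatrix] using
      mul_le_mul_of_nonneg_left (hΥ.1 i) (by positivity : 0 ≤ |x i| ^ (r + 1))
  · have hprod : |spow (x i) r * Υ i j * x j| ≤ |x i| ^ r * |x j| * hi i j := by
      rw [abs_mul, abs_mul, mul_right_comm]
      exact mul_le_mul (mul_le_mul_of_nonneg_right (abs_spow_le_s3 _ _) (abs_nonneg _))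
        (hΥ.2 i j) (abs_nonneg _) (by positivity)
    have hyoung := mul_le_mul_of_nonneg_right
      (rpow_mul_le_weighted_rpow_add hr (abs_nonneg (x i)) (abs_nonneg (x j))) (hhi i j)
    simp only [boundaryMatrix, of_apply, if_neg hij, mul_neg]
    linarith [neg_abs_le (spow (x i) r * Υ i j * x j)]

theorem stmt3_general {m : ℕ} (l : ℝ) (hl : l ∈ Set.Icc (-1 : ℝ) 0)
    (lo : Fin m → ℝ) (hi : Fin m → Fin m → ℝ)
    (hhi : ∀ i j, 0 ≤ hi i j)
    (p k : Fin m → ℝ) (hp : ∀ i, 0 < p i) (hk : ∀ i, 0 < k i)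
    (Υ : Matrix (Fin m) (Fin m) ℝ) (hΥ : SatisfiesBounds lo hi Υ)
    (Hd : Matrix (Fin m) (Fin m) ℝ)
    (hHd : Hd = ((1 + l) / (2 + l)) •
          (Matrix.diagonal p * boundaryMatrix lo hi * Matrix.diagonal k) +
        (1 / (2 + l)) •
          (Matrix.diagonal k * (boundaryMatrix lo hi)ᵀ * Matrix.diagonal p)) :
    ∀ x : Fin m → ℝ,
      ∑ i, ∑ j, |x i| ^ (2 + l) * Hd i j ≤
        ∑ i, ∑ j,
          spow (x i) (1 + l) * ((Matrix.diagonal p * Υ * Matrix.diagonal k) i j) * x j := by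
  intro x
  have hr : 0 ≤ 1 + l := by linarith [hl.1]
  rw [show 2 + l = 1 + l + 1 by ring] at hHd ⊢
  set C := diagonal p * boundaryMatrix lo hi * diagonal k
  have hCt : diagonal k * (boundaryMatrix lo hi)ᵀ * diagonal p = Cᵀ := by
    simp only [C, transpose_mul, diagonal_transpose, Matrix.mul_assoc]
  simp only [hHd, hCt, Matrix.add_apply, Matrix.smul_apply, transpose_apply, smul_eq_mul]
  rw [sum_sum_mul_add_transpose]
  refine sum_le_sum fun i _ => sum_le_sum fun j _ => ?_
  simp only [C, diagonal_mul_mul_diagonal_apply]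
  calc _ = (p i * k j) * (((1 + l) / (1 + l + 1) * |x i| ^ (1 + l + 1)
          + 1 / (1 + l + 1) * |x j| ^ (1 + l + 1)) * boundaryMatrix lo hi i j) := by ring
    _ ≤ (p i * k j) * (spow (x i) (1 + l) * Υ i j * x j) :=
        mul_le_mul_of_nonneg_left (boundaryMatrix_term_le hhi hΥ hr x i j)
          (mul_pos (hp i) (hk j)).le
    _ = _ := by ring

theorem stmt3 {m : ℕ} (hm : 1 ≤ m) (l : ℝ) (hl : l ∈ Set.Icc (-1 : ℝ) 0)
    (lo : Fin m → ℝ) (hi : Fin m → Fin m → ℝ)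
    (hlo : ∀ i, 0 < lo i) (hhi : ∀ i j, 0 ≤ hi i j) (hdiag : ∀ i, lo i ≤ hi i i)
    (p k : Fin m → ℝ) (hp : ∀ i, 0 < p i) (hk : ∀ i, 0 < k i)
    (Υ : Matrix (Fin m) (Fin m) ℝ) (hΥ : SatisfiesBounds lo hi Υ)
    (Hd : Matrix (Fin m) (Fin m) ℝ)
    (hHd : Hd = ((1 + l) / (2 + l)) •
          (Matrix.diagonal p * boundaryMatrix lo hi * Matrix.diagonal k) +
        (1 / (2 + l)) •
          (Matrix.diagonal k * (boundaryMatrix lo hi)ᵀ * Matrix.diagonal p)) :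
    ∀ x : Fin m → ℝ,
      ∑ i, ∑ j, |x i| ^ (2 + l) * Hd i j ≤
        ∑ i, ∑ j,
          spow (x i) (1 + l) * ((Matrix.diagonal p * Υ * Matrix.diagonal k) i j) * x j :=
  stmt3_general l hl lo hi hhi p k hp hk Υ hΥ Hd hHd
end

section
/- Suppose the boundary matrix B is an M-matrix. Then for every matrix Υ satisfying the interval bounds and for all positive diagonal matrices P and 𝔹 in ℝ^{m×m}, the matrix P·Υ·𝔹 is positive stable, i.e. every eigenvalue (complex root of the characteristic polynomial) of P·Υ·𝔹 has positive real part. -/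
open Matrix BigOperators Finset

section AuxMMatrix

attribute [local instance] Matrix.linftyOpNormedRing Matrix.linftyOpNormedAlgebra

variable {m : ℕ}

lemma aux_eval_charpoly {n : Type*} [Fintype n] [DecidableEq n] {R : Type*} [CommRing R]
    (M : Matrix n n R) (r : R) :
    M.charpoly.eval r = (Matrix.scalar n r - M).det := by
  rw [Matrix.charpoly, eval_det, Matrix.matPolyEquiv_charmatrix]
  simp

lemma aux_mul_nonneg {A B : Matrix (Fin m) (Fin m) ℝ}
    (hA : ∀ i j, 0 ≤ A i j) (hB : ∀ i j, 0 ≤ B i j) : ∀ i j, 0 ≤ (A * B) i j := by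
  intro i j
  rw [Matrix.mul_apply]
  exact Finset.sum_nonneg fun k _ => mul_nonneg (hA i k) (hB k j)

lemma aux_pow_nonneg {A : Matrix (Fin m) (Fin m) ℝ} (hA : ∀ i j, 0 ≤ A i j) :
    ∀ (n : ℕ) (i j : Fin m), 0 ≤ (A ^ n) i j := by
  intro n
  induction n with
  | zero => intro i j; rw [pow_zero]; by_cases h : i = j <;> simp [Matrix.one_apply, h]
  | succ n ih => rw [pow_succ]; exact aux_mul_nonneg ih hA

lemma aux_entry_continuous (i j : Fin m) :
    Continuous fun A : Matrix (Fin m) (Fin m) ℝ => A i j :=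
  (continuous_apply j).comp (continuous_apply i)

lemma aux_tsum_nonneg {f : ℕ → Matrix (Fin m) (Fin m) ℝ} (hf : Summable f)
    (h : ∀ n i j, 0 ≤ f n i j) (i j : Fin m) : 0 ≤ (∑' n, f n) i j := by
  have h1 : HasSum (fun n => f n i j) ((∑' n, f n) i j) :=
    hf.hasSum.map (AddMonoidHom.mk' (fun A : Matrix (Fin m) (Fin m) ℝ => A i j)
      (fun _ _ => rfl)) (aux_entry_continuous i j)
  exact h1.tsum_eq ▸ tsum_nonneg (fun n => h n i j)



-- a unit for c • 1
lemma aux_isUnit_smul_one {c : ℝ} (hc : c ≠ 0) :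
    IsUnit (c • (1 : Matrix (Fin m) (Fin m) ℝ)) := by
  refine ⟨⟨c • 1, c⁻¹ • 1, ?_, ?_⟩, rfl⟩ <;>
    rw [smul_mul_assoc, one_mul, smul_smul] <;>
    first
      | rw [mul_inv_cancel₀ hc, one_smul]
      | rw [inv_mul_cancel₀ hc, one_smul]

lemma aux_inverse_smul_one {c : ℝ} (hc : c ≠ 0) :
    Ring.inverse (c • (1 : Matrix (Fin m) (Fin m) ℝ)) = c⁻¹ • 1 := by
  have h1 : (c • (1 : Matrix (Fin m) (Fin m) ℝ)) * (c⁻¹ • 1) = 1 := by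
    rw [smul_mul_assoc, one_mul, smul_smul, mul_inv_cancel₀ hc, one_smul]
  have h2 : (c⁻¹ • (1 : Matrix (Fin m) (Fin m) ℝ)) * (c • 1) = 1 := by
    rw [smul_mul_assoc, one_mul, smul_smul, inv_mul_cancel₀ hc, one_smul]
  exact Ring.inverse_unit ⟨c • 1, c⁻¹ • 1, h1, h2⟩

/-- Neumann series step: if `‖N‖ < c`, `N ≥ 0`, then `c•1 - N` is a unit with nonneg inverse. -/
lemma aux_neumann {N : Matrix (Fin m) (Fin m) ℝ} (hN : ∀ i j, 0 ≤ N i j)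
    {c : ℝ} (hc : 0 < c) (hNc : ‖N‖ < c) :
    IsUnit (c • (1 : Matrix (Fin m) (Fin m) ℝ) - N) ∧
      ∀ i j, 0 ≤ Ring.inverse (c • (1 : Matrix (Fin m) (Fin m) ℝ) - N) i j := by
  set x : Matrix (Fin m) (Fin m) ℝ := c⁻¹ • N with hx
  have hxlt : ‖x‖ < 1 := by
    rw [hx, norm_smul, norm_inv, Real.norm_of_nonneg hc.le]
    rw [inv_mul_lt_iff₀ hc, mul_one]
    exact hNc
  have hxnn : ∀ i j, 0 ≤ x i j := fun i j => by
    simpa [hx, Matrix.smul_apply] using mul_nonneg (inv_nonneg.2 hc.le) (hN i j)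
  have hfact : c • (1 : Matrix (Fin m) (Fin m) ℝ) - N = (c • 1) * (1 - x) := by
    rw [mul_sub, mul_one, smul_mul_assoc, one_mul, smul_smul, mul_inv_cancel₀ hc.ne',
      one_smul]
  have hu1 : IsUnit (c • (1 : Matrix (Fin m) (Fin m) ℝ)) := aux_isUnit_smul_one hc.ne'
  have hu2 : IsUnit (1 - x) := isUnit_one_sub_of_norm_lt_one hxlt
  have hcomm : Commute (c • (1 : Matrix (Fin m) (Fin m) ℝ)) (1 - x) := by
    unfold Commute SemiconjBy
    rw [smul_mul_assoc, one_mul, mul_smul_comm, mul_one]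
  constructor
  · rw [hfact]; exact hu1.mul hu2
  · intro i j
    have hinv : Ring.inverse (c • (1 : Matrix (Fin m) (Fin m) ℝ) - N)
        = Ring.inverse (1 - x) * Ring.inverse (c • 1) := by
      rw [hfact, Ring.mul_inverse_rev' hcomm]
    rw [hinv, ← geom_series_eq_inverse x hxlt, aux_inverse_smul_one hc.ne']
    refine aux_mul_nonneg ?_ ?_ i j
    · exact aux_tsum_nonneg (summable_geometric_of_norm_lt_one hxlt)
        (fun n => aux_pow_nonneg hxnn n)
    · intro i j
      by_cases h : i = j <;> simp [Matrix.one_apply, h, inv_nonneg.2 hc.le]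
lemma exists_pos_vec {m : ℕ} (hm : 1 ≤ m) (lo : Fin m → ℝ) (hi : Fin m → Fin m → ℝ)
    (hlo : ∀ i, 0 < lo i) (hhi : ∀ i j, 0 ≤ hi i j)
    (hB : IsMMatrix (boundaryMatrix lo hi)) :
    ∃ d : Fin m → ℝ, (∀ i, 0 < d i) ∧
      ∀ i, ∑ j ∈ Finset.univ.erase i, hi i j * d j < lo i * d i := by
  have hne : Nonempty (Fin m) := ⟨⟨0, hm⟩⟩
  set B : Matrix (Fin m) (Fin m) ℝ := boundaryMatrix lo hi with hBdef
  -- STEP 1: B + t • 1 is a unit for t ≥ 0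
  have hunit : ∀ t : ℝ, 0 ≤ t → IsUnit (B + t • 1) := by
    intro t ht
    rw [Matrix.isUnit_iff_isUnit_det, isUnit_iff_ne_zero]
    intro hdet
    have hdetC : ((B + t • 1).map Complex.ofReal).det = 0 := by
      have : ((B + t • 1).map Complex.ofReal).det = Complex.ofRealHom (B + t • 1).det :=
        (RingHom.map_det Complex.ofRealHom _).symm
      rw [this, hdet, map_zero]
    have hmap : (B + t • (1 : Matrix (Fin m) (Fin m) ℝ)).map Complex.ofReal
        = B.map Complex.ofReal + (t : ℂ) • 1 := by
      ext i j
      by_cases h : i = j <;>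
        simp [Matrix.map_apply, Matrix.add_apply, Matrix.smul_apply, Matrix.one_apply, h]
    have hroot : (B.map Complex.ofReal).charpoly.IsRoot (-(t : ℂ)) := by
      have hsc : Matrix.scalar (Fin m) (-(t : ℂ)) - B.map Complex.ofReal
          = -(B.map Complex.ofReal + (t : ℂ) • 1) := by
        rw [Matrix.scalar_apply]
        ext i j
        by_cases h : i = j
        · subst h
          simp only [Matrix.sub_apply, Matrix.diagonal_apply_eq, Matrix.map_apply,
            Matrix.neg_apply, Matrix.add_apply, Matrix.smul_apply, Matrix.one_apply_eq,
            smul_eq_mul, mul_one]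
          ring
        · simp [Matrix.diagonal, Matrix.one_apply, Matrix.sub_apply, Matrix.add_apply,
            Matrix.smul_apply, Matrix.neg_apply, Matrix.of_apply, h]
      show Polynomial.eval (-(t:ℂ)) (B.map Complex.ofReal).charpoly = 0
      rw [aux_eval_charpoly, hsc, Matrix.det_neg, ← hmap, hdetC, mul_zero]
    have := hB.2 _ hroot
    simp only [Complex.neg_re, Complex.ofReal_re] at this
    linarith
  -- the splitting B + t•1 = (t+s₀)•1 - N
  set s₀ : ℝ := ∑ i, lo i with hs₀def
  have hs₀pos : 0 < s₀ := Finset.sum_pos (fun i _ => hlo i) Finset.univ_nonempty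
  have hles₀ : ∀ i, lo i ≤ s₀ := fun i =>
    Finset.single_le_sum (fun j _ => (hlo j).le) (Finset.mem_univ i)
  set N : Matrix (Fin m) (Fin m) ℝ := s₀ • 1 - B with hNdef
  have hNnn : ∀ i j, 0 ≤ N i j := by
    intro i j
    have hB' : B i j = if i = j then lo i else -hi i j := rfl
    rw [hNdef, Matrix.sub_apply, Matrix.smul_apply, hB']
    by_cases h : i = j
    · subst h
      rw [if_pos rfl, Matrix.one_apply_eq, smul_eq_mul, mul_one]
      linarith [hles₀ i]
    · rw [if_neg h, Matrix.one_apply_ne h, smul_eq_mul, mul_zero, zero_sub, neg_neg]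
      exact hhi i j
  have hBN : ∀ t : ℝ, B + t • 1 = (t + s₀) • (1 : Matrix (Fin m) (Fin m) ℝ) - N := by
    intro t
    rw [hNdef, add_smul]
    abel
  -- STEP 2: nonneg inverse for large t
  have hlarge : ∀ t : ℝ, ‖N‖ < t + s₀ → 0 ≤ t →
      ∀ i j, 0 ≤ Ring.inverse (B + t • (1 : Matrix (Fin m) (Fin m) ℝ)) i j := by
    intro t hNt ht i j
    have hc : (0:ℝ) < t + s₀ := lt_of_le_of_lt (norm_nonneg N) hNt
    rw [hBN t]
    exact (aux_neumann hNnn hc hNt).2 i j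
  -- STEP 3: sInf argument
  set S : Set ℝ := {t | 0 ≤ t ∧ ∀ i j, 0 ≤ Ring.inverse (B + t • (1 : Matrix (Fin m) (Fin m) ℝ)) i j}
    with hSdef
  have hSne : S.Nonempty := by
    refine ⟨max 0 ‖N‖, le_max_left _ _, hlarge _ ?_ (le_max_left _ _)⟩
    calc ‖N‖ ≤ max 0 ‖N‖ := le_max_right _ _
    _ < max 0 ‖N‖ + s₀ := by linarith
  have hSbdd : BddBelow S := ⟨0, fun t ht => ht.1⟩
  set c : ℝ := sInf S with hcdef
  have hc0 : 0 ≤ c := le_csInf hSne (fun t ht => ht.1)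
  -- continuity of the resolvent
  have hcont : ∀ t₀ : ℝ, 0 ≤ t₀ →
      ContinuousAt (fun t : ℝ => Ring.inverse (B + t • (1 : Matrix (Fin m) (Fin m) ℝ))) t₀ := by
    intro t₀ ht₀
    have h1 : Continuous (fun t : ℝ => B + t • (1 : Matrix (Fin m) (Fin m) ℝ)) :=
      continuous_const.add (continuous_id.smul continuous_const)
    have hu := hunit t₀ ht₀
    have h2 : ContinuousAt Ring.inverse (B + t₀ • (1 : Matrix (Fin m) (Fin m) ℝ)) := by
      have := NormedRing.inverse_continuousAt hu.unit
      rwa [hu.unit_spec] at this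
    exact ContinuousAt.comp (g := Ring.inverse) h2 h1.continuousAt
  -- c ∈ S
  have hcS : c ∈ S := by
    refine ⟨hc0, fun i j => ?_⟩
    by_contra hneg
    push_neg at hneg
    have hcont' : ContinuousAt
        (fun t : ℝ => Ring.inverse (B + t • (1 : Matrix (Fin m) (Fin m) ℝ)) i j) c :=
      (aux_entry_continuous i j).continuousAt.comp (hcont c hc0)
    have hev : ∀ᶠ t in nhds c,
        Ring.inverse (B + t • (1 : Matrix (Fin m) (Fin m) ℝ)) i j < 0 :=
      hcont'.eventually_lt continuousAt_const hneg
    rw [Metric.eventually_nhds_iff] at hev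
    obtain ⟨δ, hδ, hball⟩ := hev
    obtain ⟨a, haS, halt⟩ := exists_lt_of_csInf_lt hSne (by linarith : c < c + δ)
    have hac : c ≤ a := csInf_le hSbdd haS
    have : Ring.inverse (B + a • (1 : Matrix (Fin m) (Fin m) ℝ)) i j < 0 := by
      apply hball
      rw [Real.dist_eq, abs_lt]
      constructor <;> linarith
    exact absurd (haS.2 i j) (not_le.2 this)
  -- c = 0
  have hczero : c = 0 := by
    by_contra hc'
    have hcpos : 0 < c := lt_of_le_of_ne hc0 (Ne.symm hc')
    set R := Ring.inverse (B + c • (1 : Matrix (Fin m) (Fin m) ℝ)) with hRdef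
    set ε : ℝ := min c (1 / (‖R‖ + 1)) with hεdef
    have hεpos : 0 < ε := lt_min hcpos (by positivity)
    have hεc : ε ≤ c := min_le_left _ _
    have hεR : ε * ‖R‖ < 1 := by
      have h1 : ε ≤ 1 / (‖R‖ + 1) := min_le_right _ _
      have h2 : (0:ℝ) < ‖R‖ + 1 := by positivity
      calc ε * ‖R‖ ≤ (1 / (‖R‖ + 1)) * ‖R‖ := by
            exact mul_le_mul_of_nonneg_right h1 (norm_nonneg _)
        _ < 1 := by
            rw [div_mul_eq_mul_div, one_mul, div_lt_one h2]
            linarith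
    -- step down
    have hnorm : ‖ε • R‖ < 1 := by
      rw [norm_smul, Real.norm_of_nonneg hεpos.le]
      exact hεR
    have hufact : B + (c - ε) • (1 : Matrix (Fin m) (Fin m) ℝ)
        = (B + c • 1) * (1 - ε • R) := by
      rw [mul_sub, mul_one, mul_smul_comm, hRdef,
        Ring.mul_inverse_cancel _ (hunit c hc0)]
      · rw [sub_smul]; abel
    have hstep : (c - ε) ∈ S := by
      refine ⟨by linarith, fun i j => ?_⟩
      have hcomm' : Ring.inverse (B + (c - ε) • (1 : Matrix (Fin m) (Fin m) ℝ))
          = Ring.inverse (1 - ε • R) * R := by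
        rw [hufact, Ring.mul_inverse_rev' ?_, hRdef]
        · -- Commute (B + c•1) (1 - ε•R)
          have h1 : (B + c • (1 : Matrix (Fin m) (Fin m) ℝ)) * (ε • R) = ε • (1:Matrix (Fin m) (Fin m) ℝ) := by
            rw [mul_smul_comm, hRdef, Ring.mul_inverse_cancel _ (hunit c hc0)]
          have h2 : (ε • R) * (B + c • (1 : Matrix (Fin m) (Fin m) ℝ)) = ε • (1:Matrix (Fin m) (Fin m) ℝ) := by
            rw [smul_mul_assoc, hRdef, Ring.inverse_mul_cancel _ (hunit c hc0)]
          unfold Commute SemiconjBy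
          rw [mul_sub, sub_mul, mul_one, one_mul, h1, h2]
      rw [hcomm']
      have hRnn : ∀ i j, 0 ≤ R i j := fun i j => hcS.2 i j
      have hxnn : ∀ i j, 0 ≤ (ε • R) i j := fun i j => by
        simpa [Matrix.smul_apply] using mul_nonneg hεpos.le (hRnn i j)
      refine aux_mul_nonneg ?_ hRnn i j
      rw [← geom_series_eq_inverse _ hnorm]
      exact aux_tsum_nonneg (summable_geometric_of_norm_lt_one hnorm)
        (fun n => aux_pow_nonneg hxnn n)
    have := csInf_le hSbdd hstep
    linarith
  -- STEP 4: extract d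
  have h0S : (0:ℝ) ∈ S := hczero ▸ hcS
  have hBu : IsUnit B := by
    have := hunit 0 le_rfl
    simpa using this
  set R := Ring.inverse B with hRdef
  have hRnn : ∀ i j, 0 ≤ R i j := by
    intro i j
    have := h0S.2 i j
    simpa using this
  have hBR : B * R = 1 := Ring.mul_inverse_cancel _ hBu
  set d : Fin m → ℝ := R *ᵥ (fun _ => (1:ℝ)) with hddef
  have hBd : B *ᵥ d = fun _ => (1:ℝ) := by
    rw [hddef, Matrix.mulVec_mulVec, hBR, Matrix.one_mulVec]
  have hdnn : ∀ i, 0 ≤ d i := by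
    intro i
    have hde : d i = ∑ j, R i j * 1 := rfl
    rw [hde]
    exact Finset.sum_nonneg fun j _ => by
      simpa using mul_nonneg (hRnn i j) zero_le_one
  have hBdi : ∀ i, lo i * d i - ∑ j ∈ Finset.univ.erase i, hi i j * d j = 1 := by
    intro i
    have h1 : (B *ᵥ d) i = 1 := congrFun hBd i
    rw [Matrix.mulVec, dotProduct] at h1
    rw [← h1, ← Finset.add_sum_erase _ _ (Finset.mem_univ i)]
    have h2 : B i i * d i = lo i * d i := by
      simp [hBdef, boundaryMatrix]
    have h3 : ∑ j ∈ Finset.univ.erase i, B i j * d j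
        = -∑ j ∈ Finset.univ.erase i, hi i j * d j := by
      rw [← Finset.sum_neg_distrib]
      refine Finset.sum_congr rfl fun j hj => ?_
      have hji : i ≠ j := fun h => (Finset.mem_erase.1 hj).1 h.symm
      simp [hBdef, boundaryMatrix, Ne.symm hji, hji]
    rw [h2, h3]
    ring
  have hdpos : ∀ i, 0 < d i := by
    intro i
    rcases lt_or_eq_of_le (hdnn i) with h | h
    · exact h
    · exfalso
      have h1 := hBdi i
      rw [← h] at h1
      have h2 : 0 ≤ ∑ j ∈ Finset.univ.erase i, hi i j * d j :=
        Finset.sum_nonneg fun j _ => mul_nonneg (hhi i j) (hdnn j)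
      nlinarith
  exact ⟨d, hdpos, fun i => by nlinarith [hBdi i]⟩


end AuxMMatrix

theorem stmt8 {m : ℕ} (hm : 1 ≤ m)
    (lo : Fin m → ℝ) (hi : Fin m → Fin m → ℝ)
    (hlo : ∀ i, 0 < lo i) (hhi : ∀ i j, 0 ≤ hi i j) (hdiag : ∀ i, lo i ≤ hi i i)
    (hB : IsMMatrix (boundaryMatrix lo hi)) :
    ∀ Υ : Matrix (Fin m) (Fin m) ℝ, SatisfiesBounds lo hi Υ →
      ∀ p b : Fin m → ℝ, (∀ i, 0 < p i) → (∀ i, 0 < b i) →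
        ∀ z : ℂ,
          ((Matrix.diagonal p * Υ * Matrix.diagonal b).map Complex.ofReal).charpoly.IsRoot z →
          0 < z.re := by
  intro Υ hΥ p b hp hb z hz
  obtain ⟨d, hdpos, hdom⟩ := exists_pos_vec hm lo hi hlo hhi hB
  set A : Matrix (Fin m) (Fin m) ℝ := Matrix.diagonal p * Υ * Matrix.diagonal b with hAdef
  set M : Matrix (Fin m) (Fin m) ℂ := A.map Complex.ofReal with hMdef
  have hAij : ∀ i j, A i j = p i * Υ i j * b j := by
    intro i j
    rw [hAdef, Matrix.mul_diagonal, Matrix.diagonal_mul]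
  have hdet : (Matrix.scalar (Fin m) z - M).det = 0 := by
    have heval : Polynomial.eval z M.charpoly = 0 := hz
    rwa [aux_eval_charpoly] at heval
  obtain ⟨v, hv0, hvec⟩ := (Matrix.exists_mulVec_eq_zero_iff).2 hdet
  have heig : ∀ i, ∑ j, M i j * v j = z * v i := by
    intro i
    have h1 := congrFun hvec i
    rw [Matrix.sub_mulVec] at h1
    have h2 : ((Matrix.scalar (Fin m) z) *ᵥ v) i = z * v i := by
      rw [Matrix.scalar_apply, Matrix.mulVec_diagonal]
    have h4 : ((Matrix.scalar (Fin m) z) *ᵥ v - M *ᵥ v) i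
        = ((Matrix.scalar (Fin m) z) *ᵥ v) i - (M *ᵥ v) i := rfl
    have h3 : (M *ᵥ v) i = ∑ j, M i j * v j := rfl
    have h5 : (0 : Fin m → ℂ) i = 0 := rfl
    rw [h4, h2, h3, h5] at h1
    exact (sub_eq_zero.1 h1).symm
  set w : Fin m → ℝ := fun j => d j / b j with hwdef
  have hw : ∀ j, 0 < w j := fun j => div_pos (hdpos j) (hb j)
  obtain ⟨i, -, hmax⟩ := Finset.exists_max_image Finset.univ (fun j => ‖v j‖ / w j)
    ⟨⟨0, hm⟩, Finset.mem_univ _⟩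
  set c : ℝ := ‖v i‖ / w i with hcdef
  obtain ⟨k, hk⟩ := Function.ne_iff.1 hv0
  have hck : 0 < ‖v k‖ / w k := div_pos (norm_pos_iff.2 hk) (hw k)
  have hc : 0 < c := lt_of_lt_of_le hck (hmax k (Finset.mem_univ k))
  have hvw : ∀ j, ‖v j‖ ≤ c * w j := fun j =>
    (div_le_iff₀ (hw j)).1 (hmax j (Finset.mem_univ j))
  have hvi : ‖v i‖ = c * w i := by
    rw [hcdef, div_mul_cancel₀ _ (hw i).ne']
  have hsplit : (z - M i i) * v i = ∑ j ∈ Finset.univ.erase i, M i j * v j := by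
    have h3 : M i i * v i + ∑ j ∈ Finset.univ.erase i, M i j * v j = ∑ j, M i j * v j :=
      Finset.add_sum_erase Finset.univ (fun j => M i j * v j) (Finset.mem_univ i)
    have h4 := heig i
    linear_combination - h4 - h3
  have hMentry : ∀ j, ‖M i j‖ = p i * |Υ i j| * b j := by
    intro j
    have he : M i j = ((p i * Υ i j * b j : ℝ) : ℂ) := by rw [hMdef, Matrix.map_apply, hAij]
    rw [he, Complex.norm_real, Real.norm_eq_abs, abs_mul, abs_mul,
      abs_of_pos (hp i), abs_of_pos (hb j)]
  have hbw : ∀ j, b j * w j = d j := by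
    intro j; rw [hwdef, mul_comm, div_mul_cancel₀ _ (hb j).ne']
  have hterm : ∀ j ∈ Finset.univ.erase i, ‖M i j * v j‖ ≤ p i * c * (hi i j * d j) := by
    intro j _
    rw [norm_mul, hMentry j]
    calc p i * |Υ i j| * b j * ‖v j‖
        ≤ p i * |Υ i j| * b j * (c * w j) := by
          apply mul_le_mul_of_nonneg_left (hvw j) (mul_nonneg (mul_nonneg (hp i).le (abs_nonneg _)) (hb j).le)
      _ = p i * c * (|Υ i j| * (b j * w j)) := by ring
      _ = p i * c * (|Υ i j| * d j) := by rw [hbw j]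
      _ ≤ p i * c * (hi i j * d j) := by
          apply mul_le_mul_of_nonneg_left
            (mul_le_mul_of_nonneg_right (hΥ.2 i j) (hdpos j).le) (mul_nonneg (hp i).le hc.le)
  have hsum : ‖z - M i i‖ * ‖v i‖ < p i * Υ i i * b i * ‖v i‖ := by
    have h1 : ‖z - M i i‖ * ‖v i‖ = ‖(z - M i i) * v i‖ := (norm_mul _ _).symm
    have h7 : p i * c * (Υ i i * d i) = p i * Υ i i * b i * ‖v i‖ := by
      rw [hvi, ← hbw i]; ring
    rw [h1, hsplit]
    calc ‖∑ j ∈ Finset.univ.erase i, M i j * v j‖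
        ≤ ∑ j ∈ Finset.univ.erase i, ‖M i j * v j‖ := norm_sum_le _ _
      _ ≤ ∑ j ∈ Finset.univ.erase i, p i * c * (hi i j * d j) := Finset.sum_le_sum hterm
      _ = p i * c * ∑ j ∈ Finset.univ.erase i, hi i j * d j := by rw [Finset.mul_sum]
      _ < p i * c * (lo i * d i) := by
          apply mul_lt_mul_of_pos_left (hdom i) (mul_pos (hp i) hc)
      _ ≤ p i * c * (Υ i i * d i) := by
          apply mul_le_mul_of_nonneg_left
            (mul_le_mul_of_nonneg_right (hΥ.1 i) (hdpos i).le) (mul_nonneg (hp i).le hc.le)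
      _ = p i * Υ i i * b i * ‖v i‖ := h7
  have hvipos : 0 < ‖v i‖ := by rw [hvi]; exact mul_pos hc (hw i)
  have hlt : ‖z - M i i‖ < p i * Υ i i * b i := (mul_lt_mul_iff_left₀ hvipos).1 hsum
  have hMii : (M i i).re = p i * Υ i i * b i := by
    rw [hMdef, Matrix.map_apply, hAij]; exact Complex.ofReal_re _
  have hre : -(‖z - M i i‖) ≤ z.re - (M i i).re := by
    have h1 := Complex.abs_re_le_norm (z - M i i)
    rw [Complex.sub_re] at h1
    linarith [(abs_le.1 h1).1]
  linarith
end

section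
/- Let l ∈ [−1,0], let W be as given (with positive diagonal P and symmetric positive definite Γ), and let M ∈ ℝ^{m×m} be arbitrary. Then there exists μ* ≥ 0 such that for every μ > μ*, the function V(x,x_I) = (2/(2−l))·μ·W(x,x_I)^{(2−l)/2} − x_Iᵀ M x is positive definite: V(0,0) = 0 and V(x,x_I) > 0 for every (x,x_I) ≠ (0,0). -/
open Matrix BigOperators Finset

/-- The weak Lyapunov function W. -/
noncomputable def Wfun {m : ℕ} (l : ℝ) (p : Fin m → ℝ) (Γ : Matrix (Fin m) (Fin m) ℝ)
    (x xI : Fin m → ℝ) : ℝ :=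
  ((1 - l) / 2) * ∑ i, p i * |x i| ^ (2 / (1 - l)) + (1 / 2) * (xI ⬝ᵥ (Γ *ᵥ xI))

/-- The strong Lyapunov function V. -/
noncomputable def Vfun {m : ℕ} (l : ℝ) (p : Fin m → ℝ) (Γ M : Matrix (Fin m) (Fin m) ℝ)
    (μ : ℝ) (x xI : Fin m → ℝ) : ℝ :=
  (2 / (2 - l)) * μ * (Wfun l p Γ x xI) ^ ((2 - l) / 2) - xI ⬝ᵥ (M *ᵥ x)

lemma quad_lower {m : ℕ} [Nonempty (Fin m)] (Γ : Matrix (Fin m) (Fin m) ℝ) (hΓ : Γ.PosDef) :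
    ∃ c > 0, ∀ v : Fin m → ℝ, c * ‖v‖ ^ 2 ≤ v ⬝ᵥ (Γ *ᵥ v) := by
  have hcont : Continuous fun v : Fin m → ℝ => v ⬝ᵥ (Γ *ᵥ v) :=
    continuous_id.dotProduct (continuous_const.matrix_mulVec continuous_id)
  have hsph : (Metric.sphere (0 : Fin m → ℝ) 1).Nonempty :=
    NormedSpace.sphere_nonempty.mpr zero_le_one
  obtain ⟨u, hu, hmin⟩ := (isCompact_sphere (0 : Fin m → ℝ) 1).exists_isMinOn hsph
    hcont.continuousOn
  have hu1 : ‖u‖ = 1 := by simpa using hu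
  have hune : u ≠ 0 := by intro h; rw [h, norm_zero] at hu1; norm_num at hu1
  refine ⟨u ⬝ᵥ (Γ *ᵥ u), hΓ.dotProduct_mulVec_pos hune, fun v => ?_⟩
  rcases eq_or_ne v 0 with rfl | hv
  · simp
  · have ht : (0:ℝ) < ‖v‖ := norm_pos_iff.mpr hv
    have hmem : (‖v‖⁻¹ • v) ∈ Metric.sphere (0 : Fin m → ℝ) 1 := by
      simp [norm_smul, abs_of_pos (inv_pos.mpr ht), inv_mul_cancel₀ ht.ne']
    have h2 := hmin hmem
    have heq : (‖v‖⁻¹ • v) ⬝ᵥ (Γ *ᵥ (‖v‖⁻¹ • v)) = ‖v‖⁻¹ * (‖v‖⁻¹ * (v ⬝ᵥ (Γ *ᵥ v))) := by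
      rw [Matrix.mulVec_smul, smul_dotProduct, dotProduct_smul]
      simp [smul_eq_mul]
    simp only [Set.mem_setOf_eq] at h2
    rw [heq] at h2
    have := mul_le_mul_of_nonneg_left h2 (sq_nonneg ‖v‖)
    calc u ⬝ᵥ (Γ *ᵥ u) * ‖v‖ ^ 2 = ‖v‖^2 * (u ⬝ᵥ (Γ *ᵥ u)) := by ring
    _ ≤ ‖v‖^2 * (‖v‖⁻¹ * (‖v‖⁻¹ * (v ⬝ᵥ (Γ *ᵥ v)))) := this
    _ = v ⬝ᵥ (Γ *ᵥ v) := by field_simp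

lemma dot_bound {m : ℕ} (M : Matrix (Fin m) (Fin m) ℝ) (x xI : Fin m → ℝ) :
    xI ⬝ᵥ (M *ᵥ x) ≤ (∑ i, ∑ j, |M i j|) * (‖xI‖ * ‖x‖) := by
  have h1 : xI ⬝ᵥ (M *ᵥ x) = ∑ i, ∑ j, xI i * (M i j * x j) := by
    simp [dotProduct, Matrix.mulVec, Finset.mul_sum]
  rw [h1, Finset.sum_mul]
  refine Finset.sum_le_sum fun i _ => ?_
  rw [Finset.sum_mul]
  refine Finset.sum_le_sum fun j _ => ?_
  calc xI i * (M i j * x j) ≤ |xI i * (M i j * x j)| := le_abs_self _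
  _ = |M i j| * (|xI i| * |x j|) := by rw [abs_mul, abs_mul]; ring
  _ ≤ |M i j| * (‖xI‖ * ‖x‖) := by
      refine mul_le_mul_of_nonneg_left (mul_le_mul ?_ ?_ (abs_nonneg _) (norm_nonneg _)) (abs_nonneg _)
      · exact (norm_le_pi_norm xI i).trans_eq' (Real.norm_eq_abs _).symm
      · exact (norm_le_pi_norm x j).trans_eq' (Real.norm_eq_abs _).symm

theorem stmt13 {m : ℕ} (l : ℝ) (hl : l ∈ Set.Icc (-1 : ℝ) 0)
    (p : Fin m → ℝ) (hp : ∀ i, 0 < p i)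
    (Γ : Matrix (Fin m) (Fin m) ℝ) (hΓ : Γ.PosDef)
    (M : Matrix (Fin m) (Fin m) ℝ) :
    ∃ μs : ℝ, 0 ≤ μs ∧ ∀ μ > μs,
      Vfun l p Γ M μ 0 0 = 0 ∧
      ∀ x xI : Fin m → ℝ, ¬(x = 0 ∧ xI = 0) → 0 < Vfun l p Γ M μ x xI := by
  obtain ⟨hl1, hl2⟩ := hl
  have h1l : (0:ℝ) < 1 - l := by linarith
  have h2l : (0:ℝ) < 2 - l := by linarith
  set s : ℝ := 2 / (1 - l) with hs_def
  have hs : 0 < s := by positivity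
  -- V(0,0) = 0
  have hW0 : Wfun l p Γ 0 0 = 0 := by
    simp [Wfun, Real.zero_rpow (show (2 / (1 - l) : ℝ) ≠ 0 by positivity)]
  have hV0 : ∀ μ : ℝ, Vfun l p Γ M μ 0 0 = 0 := by
    intro μ
    have he : ((2 - l)/2 : ℝ) ≠ 0 := by positivity
    simp [Vfun, hW0, Real.zero_rpow he]
  rcases isEmpty_or_nonempty (Fin m) with hE | hNE
  · refine ⟨0, le_refl 0, fun μ _ => ⟨hV0 μ, fun x xI h => ?_⟩⟩
    exact absurd ⟨Subsingleton.elim x 0, Subsingleton.elim xI 0⟩ h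
  -- nonneg of first sum
  have hsum_nn : ∀ x : Fin m → ℝ, (0:ℝ) ≤ ∑ i, p i * |x i| ^ s :=
    fun x => Finset.sum_nonneg fun i _ =>
      mul_nonneg (hp i).le (Real.rpow_nonneg (abs_nonneg _) _)
  -- lower bound via Γ
  obtain ⟨c, hc, hcq⟩ := quad_lower Γ hΓ
  set b : ℝ := c / 2 with hb_def
  have hb : 0 < b := by positivity
  have hBW : ∀ x xI : Fin m → ℝ, b * ‖xI‖ ^ 2 ≤ Wfun l p Γ x xI := by
    intro x xI
    have h2 : b * ‖xI‖ ^ 2 ≤ (1/2) * (xI ⬝ᵥ (Γ *ᵥ xI)) := by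
      have := hcq xI; rw [hb_def]; linarith
    have h3 : (0:ℝ) ≤ ((1 - l) / 2) * ∑ i, p i * |x i| ^ s :=
      mul_nonneg (by positivity) (hsum_nn x)
    unfold Wfun; linarith
  -- lower bound via p
  obtain ⟨i0, -, hmin⟩ := Finset.exists_min_image Finset.univ p ⟨Classical.arbitrary _, Finset.mem_univ _⟩
  set a : ℝ := ((1 - l) / 2) * p i0 with ha_def
  have ha : 0 < a := by have := hp i0; positivity
  have hAW : ∀ x xI : Fin m → ℝ, a * ‖x‖ ^ s ≤ Wfun l p Γ x xI := by
    intro x xI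
    obtain ⟨i1, -, hmax⟩ := Finset.exists_max_image Finset.univ (fun i => |x i|)
      ⟨Classical.arbitrary _, Finset.mem_univ _⟩
    have hxle : ‖x‖ ≤ |x i1| := by
      rw [show |x i1| = ‖x i1‖ from (Real.norm_eq_abs _).symm]
      exact (pi_norm_le_iff_of_nonneg (norm_nonneg _)).mpr fun i => by
        simpa [Real.norm_eq_abs] using hmax i (Finset.mem_univ i)
    have h1 : ‖x‖ ^ s ≤ |x i1| ^ s :=
      Real.rpow_le_rpow (norm_nonneg _) hxle hs.le
    have h2 : |x i1| ^ s ≤ ∑ i, (p i / p i0) * |x i| ^ s := by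
      calc |x i1| ^ s = (p i1 / p i0) * |x i1| ^ s * (p i0 / p i1) := by
            field_simp [(hp i1).ne', (hp i0).ne']
      _ ≤ (p i1 / p i0) * |x i1| ^ s * 1 := by
            refine mul_le_mul_of_nonneg_left ?_ ?_
            · exact div_le_one_of_le₀ (hmin i1 (Finset.mem_univ i1)) (hp i1).le
            · have := hp i1; have := hp i0; positivity
      _ = (p i1 / p i0) * |x i1| ^ s := mul_one _
      _ ≤ ∑ i, (p i / p i0) * |x i| ^ s := by
            refine Finset.single_le_sum (f := fun i => p i / p i0 * |x i| ^ s) (fun i _ => ?_) (Finset.mem_univ i1)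
            have := hp i; have := hp i0; positivity
    have h3 : a * ‖x‖ ^ s ≤ ((1 - l) / 2) * ∑ i, p i * |x i| ^ s := by
      have := Real.rpow_nonneg (norm_nonneg x) s
      calc a * ‖x‖ ^ s ≤ a * (∑ i, (p i / p i0) * |x i| ^ s) := by
            exact mul_le_mul_of_nonneg_left (h1.trans h2) ha.le
      _ = ((1 - l) / 2) * ∑ i, p i * |x i| ^ s := by
            rw [ha_def, Finset.mul_sum, Finset.mul_sum]
            refine Finset.sum_congr rfl fun i _ => ?_
            field_simp [(hp i0).ne']
    have h4 : (0:ℝ) ≤ (1/2) * (xI ⬝ᵥ (Γ *ᵥ xI)) := by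
      have := hcq xI; have := sq_nonneg ‖xI‖; nlinarith
    unfold Wfun; linarith
  set K : ℝ := ∑ i, ∑ j, |M i j| with hK_def
  have hK : 0 ≤ K := Finset.sum_nonneg fun i _ => Finset.sum_nonneg fun j _ => abs_nonneg _
  set c₀ : ℝ := b ^ (1/2 : ℝ) * a ^ ((1 - l)/2) with hc0_def
  have hc0 : 0 < c₀ := mul_pos (Real.rpow_pos_of_pos hb _) (Real.rpow_pos_of_pos ha _)
  refine ⟨(2 - l)/2 * (K / c₀), by positivity, fun μ hμ => ?_⟩
  have hμ0 : 0 < μ := lt_of_le_of_lt (by positivity) hμ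
  refine ⟨hV0 μ, fun x xI hne => ?_⟩
  by_cases hx : x = 0
  · have hxI : xI ≠ 0 := fun h => hne ⟨hx, h⟩
    have hxIn : 0 < ‖xI‖ := norm_pos_iff.mpr hxI
    have hWpos : 0 < Wfun l p Γ x xI := lt_of_lt_of_le (by positivity) (hBW x xI)
    have hz : xI ⬝ᵥ (M *ᵥ x) = 0 := by rw [hx]; simp
    unfold Vfun
    rw [hz, sub_zero]
    exact mul_pos (mul_pos (div_pos two_pos h2l) hμ0) (Real.rpow_pos_of_pos hWpos _)
  · by_cases hxI : xI = 0
    · have hxn : 0 < ‖x‖ := norm_pos_iff.mpr hx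
      have hWpos : 0 < Wfun l p Γ x xI :=
        lt_of_lt_of_le (by positivity) (hAW x xI)
      have hz : xI ⬝ᵥ (M *ᵥ x) = 0 := by rw [hxI]; simp
      unfold Vfun
      rw [hz, sub_zero]
      exact mul_pos (mul_pos (div_pos two_pos h2l) hμ0) (Real.rpow_pos_of_pos hWpos _)
    · have hxn : 0 < ‖x‖ := norm_pos_iff.mpr hx
      have hxIn : 0 < ‖xI‖ := norm_pos_iff.mpr hxI
      have hWpos : 0 < Wfun l p Γ x xI := lt_of_lt_of_le (by positivity) (hBW x xI)
      have h1 : b ^ (1/2:ℝ) * ‖xI‖ ≤ (Wfun l p Γ x xI) ^ (1/2:ℝ) := by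
        have h := Real.rpow_le_rpow (by positivity) (hBW x xI) (by norm_num : (0:ℝ) ≤ 1/2)
        rwa [Real.mul_rpow hb.le (sq_nonneg _), ← Real.rpow_natCast ‖xI‖ 2,
          ← Real.rpow_mul (norm_nonneg _), (by norm_num : ((2:ℕ):ℝ) * (1/2) = 1),
          Real.rpow_one] at h
      have h2 : a ^ ((1-l)/2) * ‖x‖ ≤ (Wfun l p Γ x xI) ^ ((1-l)/2) := by
        have h := Real.rpow_le_rpow (by positivity) (hAW x xI)
          (by positivity : (0:ℝ) ≤ (1-l)/2)
        rwa [Real.mul_rpow ha.le (Real.rpow_nonneg (norm_nonneg _) _),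
          ← Real.rpow_mul (norm_nonneg _),
          (show s * ((1-l)/2) = 1 by rw [hs_def]; field_simp),
          Real.rpow_one] at h
      have hWsplit : (Wfun l p Γ x xI) ^ ((2-l)/2) =
          (Wfun l p Γ x xI) ^ (1/2:ℝ) * (Wfun l p Γ x xI) ^ ((1-l)/2) := by
        rw [← Real.rpow_add hWpos]; congr 1; ring
      have h3 : c₀ * (‖xI‖ * ‖x‖) ≤ (Wfun l p Γ x xI) ^ ((2-l)/2) := by
        rw [hWsplit, hc0_def]
        calc b^(1/2:ℝ)*a^((1-l)/2) * (‖xI‖*‖x‖)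
            = (b^(1/2:ℝ)*‖xI‖)*(a^((1-l)/2)*‖x‖) := by ring
        _ ≤ (Wfun l p Γ x xI)^(1/2:ℝ) * (Wfun l p Γ x xI)^((1-l)/2) :=
            mul_le_mul h1 h2 (by positivity) (Real.rpow_nonneg hWpos.le _)
      have h4 := dot_bound M x xI
      have h5 : K < 2/(2-l) * μ * c₀ := by
        have e2 := mul_lt_mul_of_pos_right hμ hc0
        have e1 : (2-l)/2*(K/c₀)*c₀ = K*(2-l)/2 := by
          field_simp
        rw [e1] at e2
        rw [div_mul_eq_mul_div, div_mul_eq_mul_div, lt_div_iff₀ h2l]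
        linarith
      unfold Vfun
      calc (0:ℝ) < (2/(2-l)*μ*c₀ - K) * (‖xI‖*‖x‖) :=
            mul_pos (by linarith) (by positivity)
      _ = 2/(2-l)*μ*(c₀*(‖xI‖*‖x‖)) - K*(‖xI‖*‖x‖) := by ring
      _ ≤ 2/(2-l)*μ*(Wfun l p Γ x xI)^((2-l)/2) - xI ⬝ᵥ (M *ᵥ x) :=
            sub_le_sub (mul_le_mul_of_nonneg_left h3
              (by positivity)) h4
end

section
/- Let l ∈ (−1,0], let W be as given (with positive diagonal P and symmetric positive definite Γ), let Υ, 𝒦, 𝔹, K_I ∈ ℝ^{m×m} satisfy P Υ 𝔹 = K_Iᵀ Γ, and let Δ : ℝ → ℝ^m. Suppose x, x_I : ℝ → ℝ^m are differentiable and satisfy for every t: x'(t) = Υ(−𝒦⌈x(t)⌋^{1/(1−l)} + 𝔹 x_I(t)) and x_I'(t) = −K_I ⌈x(t)⌋^{(1+l)/(1−l)} + Δ(t). Then t ↦ W(x(t), x_I(t)) is differentiable and its derivative at every t equals −⌈x(t)⌋^{(1+l)/(1−l),T} P Υ 𝒦 ⌈x(t)⌋^{1/(1−l)} + x_I(t)ᵀ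 Γ Δ(t). In particular, if Δ ≡ 0 and ⌈z⌋^{(1+l)/(1−l),T} P Υ 𝒦 ⌈z⌋^{1/(1−l)} > 0 for all z ≠ 0, the derivative is negative whenever x(t) ≠ 0. -/
open Matrix BigOperators Finset

/-- Componentwise signed power of a vector. -/
noncomputable def spowVec {m : ℕ} (x : Fin m → ℝ) (d : ℝ) : Fin m → ℝ :=
  fun i => spow (x i) d

lemma spow_hasDerivAt {q : ℝ} (hq : 1 < q) (y : ℝ) :
    HasDerivAt (fun z : ℝ => |z| ^ q) (q * spow y (q - 1)) y := by
  have h := hasDerivAt_abs_rpow y hq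
  convert h using 1
  unfold spow
  rcases lt_trichotomy y 0 with h0 | h0 | h0
  · rw [Real.sign_of_neg h0, abs_of_neg h0,
      show q - 1 = (q - 2) + 1 by ring, Real.rpow_add (by linarith) _ 1, Real.rpow_one]
    ring
  · simp [h0]
  · rw [Real.sign_of_pos h0, abs_of_pos h0,
      show q - 1 = (q - 2) + 1 by ring, Real.rpow_add h0 _ 1, Real.rpow_one]
    ring

theorem stmt19 {m : ℕ} (l : ℝ) (hl : l ∈ Set.Ioc (-1 : ℝ) 0)
    (p : Fin m → ℝ) (hp : ∀ i, 0 < p i)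
    (Γ : Matrix (Fin m) (Fin m) ℝ) (hΓ : Γ.PosDef)
    (Υ 𝒦 𝔹 KI : Matrix (Fin m) (Fin m) ℝ)
    (hALE : Matrix.diagonal p * Υ * 𝔹 = KIᵀ * Γ)
    (Δ : ℝ → Fin m → ℝ) (x xI : ℝ → Fin m → ℝ)
    (hx : ∀ t, HasDerivAt x
      (Υ *ᵥ (-(𝒦 *ᵥ spowVec (x t) (1 / (1 - l))) + 𝔹 *ᵥ xI t)) t)
    (hxI : ∀ t, HasDerivAt xI
      (-(KI *ᵥ spowVec (x t) ((1 + l) / (1 - l))) + Δ t) t) :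
    (∀ t, HasDerivAt (fun s => Wfun l p Γ (x s) (xI s))
      (-(∑ i, ∑ j, spow (x t i) ((1 + l) / (1 - l)) *
          ((Matrix.diagonal p * Υ * 𝒦) i j) * spow (x t j) (1 / (1 - l))) +
        xI t ⬝ᵥ (Γ *ᵥ Δ t)) t) ∧
    ((∀ t, Δ t = 0) →
      (∀ z : Fin m → ℝ, z ≠ 0 →
        0 < ∑ i, ∑ j, spow (z i) ((1 + l) / (1 - l)) *
          ((Matrix.diagonal p * Υ * 𝒦) i j) * spow (z j) (1 / (1 - l))) →
      ∀ t, x t ≠ 0 → deriv (fun s => Wfun l p Γ (x s) (xI s)) t < 0) := by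
  have hl1 : (0:ℝ) < 1 - l := by linarith [hl.2]
  set q : ℝ := 2 / (1 - l) with hqdef
  have hq : 1 < q := by
    rw [hqdef, lt_div_iff₀ hl1]; linarith [hl.1]
  have hκ : q - 1 = (1 + l) / (1 - l) := by
    rw [hqdef]; field_simp; ring
  have hsym : Γᵀ = Γ := by
    ext i j
    simpa using (hΓ.1.apply j i).symm
  have hsdp : ∀ a b : Fin m → ℝ, a ⬝ᵥ (Γ *ᵥ b) = b ⬝ᵥ (Γ *ᵥ a) := by
    intro a b
    rw [dotProduct_mulVec]
    conv_lhs => rw [← hsym, vecMul_transpose]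
    rw [dotProduct_comm]
  have main : ∀ t, HasDerivAt (fun s => Wfun l p Γ (x s) (xI s))
      (-(∑ i, ∑ j, spow (x t i) ((1 + l) / (1 - l)) *
          ((Matrix.diagonal p * Υ * 𝒦) i j) * spow (x t j) (1 / (1 - l))) +
        xI t ⬝ᵥ (Γ *ᵥ Δ t)) t := by
    intro t
    set u : Fin m → ℝ := spowVec (x t) ((1 + l) / (1 - l)) with hu
    set sv : Fin m → ℝ := spowVec (x t) (1 / (1 - l)) with hsv
    set v : Fin m → ℝ := Υ *ᵥ (-(𝒦 *ᵥ sv) + 𝔹 *ᵥ xI t) with hv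
    set w : Fin m → ℝ := -(KI *ᵥ u) + Δ t with hw
    have hxi : ∀ i, HasDerivAt (fun s => x s i) (v i) t := fun i => hasDerivAt_pi.mp (hx t) i
    have hxIi : ∀ i, HasDerivAt (fun s => xI s i) (w i) t := fun i => hasDerivAt_pi.mp (hxI t) i
    have hS : HasDerivAt (fun s => ∑ i, p i * |x s i| ^ q)
        (∑ i, p i * (q * spow (x t i) (q - 1) * v i)) t := by
      apply HasDerivAt.fun_sum
      intro i _
      exact (((spow_hasDerivAt hq (x t i)).comp t (hxi i))).const_mul (p i)
    have hQ : HasDerivAt (fun s => xI s ⬝ᵥ (Γ *ᵥ xI s))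
        (∑ i, ∑ j, (w i * (Γ i j * xI t j) + xI t i * (Γ i j * w j))) t := by
      have heq : (fun s => xI s ⬝ᵥ (Γ *ᵥ xI s))
          = fun s => ∑ i, ∑ j, xI s i * (Γ i j * xI s j) := by
        funext s
        simp [dotProduct, mulVec, Finset.mul_sum]
      rw [heq]
      apply HasDerivAt.fun_sum
      intro i _
      apply HasDerivAt.fun_sum
      intro j _
      exact (hxIi i).mul ((hxIi j).const_mul (Γ i j))
    have hW : HasDerivAt (fun s => Wfun l p Γ (x s) (xI s))
        (((1 - l) / 2) * (∑ i, p i * (q * spow (x t i) (q - 1) * v i))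
          + (1 / 2) * (∑ i, ∑ j, (w i * (Γ i j * xI t j) + xI t i * (Γ i j * w j)))) t := by
      unfold Wfun
      exact (hS.const_mul _).add (hQ.const_mul _)
    convert hW using 1
    have h1 : ((1 - l) / 2) * (∑ i, p i * (q * spow (x t i) (q - 1) * v i))
        = u ⬝ᵥ (Matrix.diagonal p *ᵥ v) := by
      rw [Finset.mul_sum]
      apply Finset.sum_congr rfl
      intro i _
      rw [mulVec_diagonal]
      have hone : ((1 - l) / 2) * q = 1 := by rw [hqdef]; field_simp
      have hui : u i = spow (x t i) (q - 1) := by rw [hu, hκ]; rfl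
      rw [hui]
      calc ((1 - l) / 2) * (p i * (q * spow (x t i) (q - 1) * v i))
          = (((1 - l) / 2) * q) * (spow (x t i) (q - 1) * (p i * v i)) := by ring
        _ = spow (x t i) (q - 1) * (p i * v i) := by rw [hone]; ring
    have h2 : (1 / 2) * (∑ i, ∑ j, (w i * (Γ i j * xI t j) + xI t i * (Γ i j * w j)))
        = xI t ⬝ᵥ (Γ *ᵥ w) := by
      have hA : ∑ i, ∑ j, w i * (Γ i j * xI t j) = w ⬝ᵥ (Γ *ᵥ xI t) := by
        simp [dotProduct, mulVec, Finset.mul_sum]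
      have hB : ∑ i, ∑ j, xI t i * (Γ i j * w j) = xI t ⬝ᵥ (Γ *ᵥ w) := by
        simp [dotProduct, mulVec, Finset.mul_sum]
      simp only [Finset.sum_add_distrib]
      rw [hA, hB, hsdp]
      ring
    rw [h1, h2]
    have hvexp : u ⬝ᵥ (Matrix.diagonal p *ᵥ v)
        = -(u ⬝ᵥ ((Matrix.diagonal p * Υ * 𝒦) *ᵥ sv))
          + u ⬝ᵥ ((Matrix.diagonal p * Υ * 𝔹) *ᵥ xI t) := by
      rw [hv, mulVec_add, mulVec_neg, mulVec_mulVec, mulVec_mulVec, mulVec_add, mulVec_neg,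
        mulVec_mulVec, mulVec_mulVec, dotProduct_add, dotProduct_neg, Matrix.mul_assoc,
        Matrix.mul_assoc]
    have hwexp : xI t ⬝ᵥ (Γ *ᵥ w)
        = -(xI t ⬝ᵥ (Γ *ᵥ (KI *ᵥ u))) + xI t ⬝ᵥ (Γ *ᵥ Δ t) := by
      rw [hw, mulVec_add, mulVec_neg, dotProduct_add, dotProduct_neg]
    have e2 : u ⬝ᵥ ((Matrix.diagonal p * Υ * 𝔹) *ᵥ xI t) = xI t ⬝ᵥ (Γ *ᵥ (KI *ᵥ u)) := by
      rw [hALE, ← mulVec_mulVec, dotProduct_mulVec, vecMul_transpose, hsdp]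
    have e3 : u ⬝ᵥ ((Matrix.diagonal p * Υ * 𝒦) *ᵥ sv)
        = ∑ i, ∑ j, spow (x t i) ((1 + l) / (1 - l)) *
            ((Matrix.diagonal p * Υ * 𝒦) i j) * spow (x t j) (1 / (1 - l)) := by
      simp [hu, hsv, dotProduct, mulVec, spowVec, Finset.mul_sum, mul_assoc]
    rw [hvexp, hwexp, e2, e3]
    ring
  refine ⟨main, ?_⟩
  intro hΔ hpos t hxt
  rw [(main t).deriv, hΔ t]
  simp only [Matrix.mulVec_zero, dotProduct_zero, add_zero]
  have := hpos (x t) hxt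
  linarith
end
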